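/- arXiv:1003.3372 — 9 statements merged into one kernel-verified Lean document; each statement's English description precedes it below -/
import Mathlib

section
/- Let X be a complex Hilbert space, H a self-adjoint operator on X with domain D(H), and A a self-adjoint operator with domain D(A). Assume that for every t ∈ ℝ the unitary group e^{-itH} maps D(A) ∩ D(H) into itself. Then for every ψ₀ ∈ D(A) ∩ D(H), the function t ↦ ⟨e^{-itH}ψ₀, A e^{-itH}ψ₀⟩ is continuously differentiable and its derivative equals i(⟨Hψ(t), Aψ(t)⟩ − ⟨Aψ(t), Hψ(t)⟩), where ψ(t) = e^{-itH}ψ₀. -/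
/-!
The difficulty is that `s ↦ A ψ(s)` need not be continuous. It is locally bounded, though:
`t ↦ ‖A ψ(t)‖` is lower semicontinuous, being a supremum of `|⟪ψ(t), A φ⟫| / ‖φ‖` over
`φ ∈ D(A)`, so by Baire it is bounded near some time `c`, and the closed graph theorem for
`U (t - c)` on `D(A) ∩ D(H)` with its graph norm moves that bound to any `t`, since
`‖H ψ(s)‖ = ‖H ψ₀‖`. A locally bounded family converging weakly on the dense set `D(A)` converges
weakly, so `A ψ` is weakly continuous. As `A` is symmetric, the difference quotient of
`⟪ψ, A ψ⟫` at `t` is `⟪q(s), A ψ(s)⟫ + ⟪A ψ(t), q(s)⟫` with `q(s) → -i H ψ(t)` strongly, which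
converges to the claimed derivative.
-/

open Complex Filter Topology Set

section InnerProduct

variable {𝕜 E : Type*} [RCLike 𝕜] [NormedAddCommGroup E] [InnerProductSpace 𝕜 E]

theorem norm_le_of_dense_of_forall_norm_inner_le {K : Set E} (hK : Dense K) {y : E} {c : ℝ}
    (hc : 0 ≤ c) (h : ∀ φ ∈ K, ‖inner 𝕜 y φ‖ ≤ c * ‖φ‖) : ‖y‖ ≤ c := by
  have hclosed : IsClosed {z : E | ‖inner 𝕜 y z‖ ≤ c * ‖z‖} :=
    isClosed_le (continuous_const.inner continuous_id).norm (continuous_const.mul continuous_norm)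
  have hy : ‖y‖ * ‖y‖ ≤ c * ‖y‖ := by
    simpa [inner_self_eq_norm_sq_to_K, sq] using
      hK.induction (P := fun z => ‖inner 𝕜 y z‖ ≤ c * ‖z‖) h hclosed y
  rcases (norm_nonneg y).eq_or_lt with hy0 | hy0
  · rw [← hy0]; exact hc
  · exact le_of_mul_le_mul_right hy hy0

theorem tendsto_inner_of_dense {ι : Type*} {l : Filter ι} {f : ι → E} {x : E} {K : Set E}
    (hK : Dense K) {M : ℝ} (hM : ∀ᶠ i in l, ‖f i‖ ≤ M)
    (h : ∀ φ ∈ K, Tendsto (fun i => inner 𝕜 φ (f i)) l (𝓝 (inner 𝕜 φ x))) (y : E) :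
    Tendsto (fun i => inner 𝕜 y (f i)) l (𝓝 (inner 𝕜 y x)) := by
  rw [Metric.tendsto_nhds]
  intro ε hε
  set R := |M| + ‖x‖ + 1
  have hR : 0 < R := by positivity
  obtain ⟨φ, hφK, hφ⟩ := hK.exists_dist_lt y (show 0 < ε / (2 * R) by positivity)
  filter_upwards [hM, Metric.tendsto_nhds.mp (h φ hφK) (ε / 2) (by positivity)] with i hi hφi
  rw [dist_eq_norm] at hφ hφi ⊢
  have hsplit : inner 𝕜 y (f i) - inner 𝕜 y x
      = inner 𝕜 (y - φ) (f i - x) + (inner 𝕜 φ (f i) - inner 𝕜 φ x) := by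
    simp only [inner_sub_left, inner_sub_right]; ring
  have hfx : ‖f i - x‖ ≤ R := by
    linarith [norm_sub_le (f i) x, le_abs_self M]
  calc ‖inner 𝕜 y (f i) - inner 𝕜 y x‖
      ≤ ‖y - φ‖ * ‖f i - x‖ + ‖inner 𝕜 φ (f i) - inner 𝕜 φ x‖ := by
        rw [hsplit]; exact (norm_add_le _ _).trans (by gcongr; exact norm_inner_le_norm _ _)
    _ ≤ ε / (2 * R) * R + ‖inner 𝕜 φ (f i) - inner 𝕜 φ x‖ := by gcongr
    _ < ε := by rw [show ε / (2 * R) * R = ε / 2 by field_simp]; linarith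

theorem tendsto_inner_of_tendsto_of_bdd {ι : Type*} {l : Filter ι} {u v : ι → E} {a b : E}
    (hu : Tendsto u l (𝓝 a)) {M : ℝ} (hM : ∀ᶠ i in l, ‖v i‖ ≤ M)
    (hv : Tendsto (fun i => inner 𝕜 a (v i)) l (𝓝 (inner 𝕜 a b))) :
    Tendsto (fun i => inner 𝕜 (u i) (v i)) l (𝓝 (inner 𝕜 a b)) := by
  have hsmall : Tendsto (fun i => inner 𝕜 (u i - a) (v i)) l (𝓝 0) := by
    refine squeeze_zero_norm' (a := fun i => ‖u i - a‖ * M) ?_ ?_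
    · filter_upwards [hM] with i hi
      exact (norm_inner_le_norm _ _).trans (by gcongr)
    · simpa using (tendsto_iff_norm_sub_tendsto_zero.mp hu).mul_const M
  simpa [inner_sub_left] using hsmall.add hv

end InnerProduct

theorem LowerSemicontinuous.exists_isOpen_forall_le {α : Type*} [TopologicalSpace α]
    [BaireSpace α] [Nonempty α] {f : α → ℝ} (hf : LowerSemicontinuous f) :
    ∃ W : Set α, IsOpen W ∧ W.Nonempty ∧ ∃ N : ℝ, ∀ x ∈ W, f x ≤ N := by
  have hcover : ⋃ n : ℕ, f ⁻¹' Iic (n : ℝ) = univ :=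
    eq_univ_of_forall fun x => mem_iUnion.mpr (exists_nat_ge (f x))
  obtain ⟨n, hn⟩ := nonempty_interior_of_iUnion_of_closed
    (fun n : ℕ => lowerSemicontinuous_iff_isClosed_preimage.mp hf n) hcover
  exact ⟨_, isOpen_interior, hn, n, fun x hx => interior_subset (s := f ⁻¹' Iic (n : ℝ)) hx⟩

theorem Equicontinuous.continuous_apply_of_dense {ι X α : Type*} [TopologicalSpace ι]
    [TopologicalSpace X] [UniformSpace α] {F : ι → X → α} (hF : Equicontinuous F) {s : Set X}
    (hs : Dense s) (h : ∀ x ∈ s, Continuous (F · x)) (x : X) : Continuous (F · x) :=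
  continuous_iff_continuousAt.mpr fun i =>
    hs.induction (P := fun x => Tendsto (F · x) (𝓝 i) (𝓝 (F i x)))
      (fun y hy => (h y hy).continuousAt) (hF.isClosed_setOfPred_tendsto (hF.continuous i)) x

section SelfAdjoint

variable {𝕜 E : Type*} [RCLike 𝕜] [NormedAddCommGroup E] [InnerProductSpace 𝕜 E]
  [CompleteSpace E] {A : E →ₗ.[𝕜] E}

theorem IsSelfAdjoint.isFormalAdjoint (hA : IsSelfAdjoint A) : A.IsFormalAdjoint A := by
  simpa only [LinearPMap.isSelfAdjoint_def.mp hA] using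
    LinearPMap.adjoint_isFormalAdjoint hA.dense_domain

theorem IsSelfAdjoint.norm_apply_le_iff (hA : IsSelfAdjoint A) (x : A.domain) {c : ℝ}
    (hc : 0 ≤ c) : ‖A x‖ ≤ c ↔ ∀ φ : A.domain, ‖inner 𝕜 (x : E) (A φ)‖ ≤ c * ‖(φ : E)‖ := by
  simp_rw [← hA.isFormalAdjoint x]
  refine ⟨fun h φ => (norm_inner_le_norm _ _).trans (by gcongr), fun h => ?_⟩
  exact norm_le_of_dense_of_forall_norm_inner_le hA.dense_domain hc fun φ hφ => h ⟨φ, hφ⟩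

theorem IsSelfAdjoint.lowerSemicontinuous_norm_apply (hA : IsSelfAdjoint A) {α : Type*}
    [TopologicalSpace α] {ψ : α → E} (hψ : Continuous ψ) (hψA : ∀ t, ψ t ∈ A.domain) :
    LowerSemicontinuous fun t => ‖A ⟨ψ t, hψA t⟩‖ := by
  refine lowerSemicontinuous_iff_isClosed_preimage.mpr fun c => ?_
  rcases lt_or_ge c 0 with hc | hc
  · convert isClosed_empty
    exact eq_empty_of_forall_notMem fun t ht => hc.not_ge ((norm_nonneg _).trans ht)
  · have hpre : (fun t => ‖A ⟨ψ t, hψA t⟩‖) ⁻¹' Iic c =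
        ⋂ φ : A.domain, {t | ‖inner 𝕜 (ψ t) (A φ)‖ ≤ c * ‖(φ : E)‖} := by
      ext t
      simp only [mem_preimage, mem_Iic, mem_iInter, mem_ofPred_eq]
      exact hA.norm_apply_le_iff ⟨ψ t, hψA t⟩ hc
    rw [hpre]
    exact isClosed_iInter fun φ =>
      isClosed_le (hψ.inner continuous_const).norm continuous_const

theorem IsSelfAdjoint.tendsto_inner_apply (hA : IsSelfAdjoint A) {ι : Type*} {l : Filter ι}
    {ψ : ι → E} (hψA : ∀ i, ψ i ∈ A.domain) {x : E} (hx : x ∈ A.domain)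
    (hψ : Tendsto ψ l (𝓝 x)) {M : ℝ} (hM : ∀ᶠ i in l, ‖A ⟨ψ i, hψA i⟩‖ ≤ M) (y : E) :
    Tendsto (fun i => inner 𝕜 y (A ⟨ψ i, hψA i⟩)) l (𝓝 (inner 𝕜 y (A ⟨x, hx⟩))) := by
  refine tendsto_inner_of_dense hA.dense_domain hM (fun φ hφ => ?_) y
  simp_rw [← hA.isFormalAdjoint ⟨φ, hφ⟩]
  exact tendsto_const_nhds.inner hψ

theorem IsSelfAdjoint.continuous_inner_apply (hA : IsSelfAdjoint A) {α : Type*}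
    [TopologicalSpace α] {φ ψ : α → E} (hφ : Continuous φ) (hψ : Continuous ψ)
    (hψA : ∀ t, ψ t ∈ A.domain) (hbdd : ∀ t, ∃ M, ∀ᶠ s in 𝓝 t, ‖A ⟨ψ s, hψA s⟩‖ ≤ M) :
    Continuous fun t => inner 𝕜 (φ t) (A ⟨ψ t, hψA t⟩) :=
  continuous_iff_continuousAt.mpr fun t =>
    have ⟨_, hM⟩ := hbdd t
    tendsto_inner_of_tendsto_of_bdd (hφ.tendsto t) hM
      (hA.tendsto_inner_apply hψA (hψA t) (hψ.tendsto t) hM _)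

end SelfAdjoint

theorem IsSelfAdjoint.hasDerivAt_inner_apply {X : Type*} [NormedAddCommGroup X]
    [InnerProductSpace ℂ X] [CompleteSpace X] {A : X →ₗ.[ℂ] X} (hA : IsSelfAdjoint A)
    {ψ : ℝ → X} (hψA : ∀ s, ψ s ∈ A.domain) {v : X} {t : ℝ} (hψ : HasDerivAt ψ v t) {M : ℝ}
    (hM : ∀ᶠ s in 𝓝 t, ‖A ⟨ψ s, hψA s⟩‖ ≤ M) :
    HasDerivAt (fun s => inner ℂ (ψ s) (A ⟨ψ s, hψA s⟩))
      (inner ℂ v (A ⟨ψ t, hψA t⟩) + inner ℂ (A ⟨ψ t, hψA t⟩) v) t := by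
  set Aψ : ℝ → X := fun s => A ⟨ψ s, hψA s⟩
  have hslope_eq : ∀ s, slope (fun s => inner ℂ (ψ s) (Aψ s)) t s =
      inner ℂ (slope ψ t s) (Aψ s) + inner ℂ (Aψ t) (slope ψ t s) := by
    intro s
    have hsymm : inner ℂ (ψ t) (Aψ s - Aψ t) = inner ℂ (Aψ t) (ψ s - ψ t) := by
      simp only [Aψ, ← LinearPMap.map_sub]
      exact (hA.isFormalAdjoint ⟨ψ t, hψA t⟩ (⟨ψ s, hψA s⟩ - ⟨ψ t, hψA t⟩)).symm
    simp only [slope_def_module, RCLike.real_smul_eq_coe_smul (K := ℂ), inner_smul_left,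
      inner_smul_right, RCLike.conj_ofReal, ← hsymm, inner_sub_left, inner_sub_right]
    ring
  have hslope := hasDerivAt_iff_tendsto_slope.mp hψ
  have hweak : Tendsto (fun s => inner ℂ v (Aψ s)) (𝓝[≠] t) (𝓝 (inner ℂ v (Aψ t))) :=
    (hA.tendsto_inner_apply hψA (hψA t) hψ.continuousAt hM v).mono_left nhdsWithin_le_nhds
  rw [hasDerivAt_iff_tendsto_slope, funext hslope_eq]
  exact (tendsto_inner_of_tendsto_of_bdd hslope (eventually_nhdsWithin_of_eventually_nhds hM)
    hweak).add (tendsto_const_nhds.inner hslope)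

section ClosedGraph

variable {𝕜 E F G : Type*} [NontriviallyNormedField 𝕜]
  [NormedAddCommGroup E] [NormedSpace 𝕜 E] [CompleteSpace E]
  [NormedAddCommGroup F] [NormedSpace 𝕜 F] [CompleteSpace F]
  [NormedAddCommGroup G] [NormedSpace 𝕜 G] [CompleteSpace G]

theorem LinearPMap.IsClosed.exists_norm_apply_comp_le {A : E →ₗ.[𝕜] F} {B : E →ₗ.[𝕜] G}
    (hA : A.IsClosed) (hB : B.IsClosed) (T : E →L[𝕜] E)
    (hT : ∀ x ∈ A.domain ⊓ B.domain, T x ∈ A.domain) :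
    ∃ K, 0 ≤ K ∧ ∀ (x : E) (hx : x ∈ A.domain ⊓ B.domain),
      ‖A ⟨T x, hT x hx⟩‖ ≤ K * (‖x‖ + ‖A ⟨x, hx.1⟩‖ + ‖B ⟨x, hx.2⟩‖) := by
  let S : Submodule 𝕜 (E × F × G) :=
    A.graph.comap ((LinearMap.fst 𝕜 E (F × G)).prod
        (LinearMap.fst 𝕜 F G ∘ₗ LinearMap.snd 𝕜 E (F × G))) ⊓
      B.graph.comap ((LinearMap.fst 𝕜 E (F × G)).prod
        (LinearMap.snd 𝕜 F G ∘ₗ LinearMap.snd 𝕜 E (F × G)))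
  have hS : _root_.IsClosed (S : Set (E × F × G)) :=
    (_root_.IsClosed.preimage (f := fun p : E × F × G => (p.1, p.2.1)) (by fun_prop) hA).inter
      (_root_.IsClosed.preimage (f := fun p : E × F × G => (p.1, p.2.2)) (by fun_prop) hB)
  have : CompleteSpace S := hS.completeSpace_coe
  have hSdom : ∀ p ∈ S, p.1 ∈ A.domain ⊓ B.domain := fun p hp =>
    ⟨LinearPMap.mem_domain_of_mem_graph hp.1, LinearPMap.mem_domain_of_mem_graph hp.2⟩
  let g : S →ₗ[𝕜] F := A.toFun ∘ₗ
    (T.toLinearMap ∘ₗ LinearMap.fst 𝕜 E (F × G) ∘ₗ S.subtype).codRestrict A.domain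
      fun p => hT _ (hSdom _ p.2)
  have hg : _root_.IsClosed (g.graph : Set (S × F)) := by
    have hgraph : (g.graph : Set (S × F)) =
        (fun q : S × F => (T (q.1 : E × F × G).1, q.2)) ⁻¹' A.graph := by
      ext ⟨p, y⟩
      simp only [SetLike.mem_coe, LinearMap.mem_graph_iff, mem_preimage]
      exact LinearPMap.image_iff _
    rw [hgraph]
    exact _root_.IsClosed.preimage (by fun_prop) hA
  let gc : S →L[𝕜] F := ⟨g, g.continuous_of_isClosed_graph hg⟩
  refine ⟨‖gc‖, gc.opNorm_nonneg, fun x hx => ?_⟩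
  have hmem : (x, A ⟨x, hx.1⟩, B ⟨x, hx.2⟩) ∈ S :=
    ⟨A.mem_graph ⟨x, hx.1⟩, B.mem_graph ⟨x, hx.2⟩⟩
  calc ‖A ⟨T x, hT x hx⟩‖ = ‖gc ⟨_, hmem⟩‖ := rfl
    _ ≤ ‖gc‖ * ‖(x, A ⟨x, hx.1⟩, B ⟨x, hx.2⟩)‖ := gc.le_opNorm _
    _ ≤ ‖gc‖ * (‖x‖ + ‖A ⟨x, hx.1⟩‖ + ‖B ⟨x, hx.2⟩‖) := by
      gcongr
      simp only [Prod.norm_def]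
      have := norm_nonneg x
      have := norm_nonneg (A ⟨x, hx.1⟩)
      have := norm_nonneg (B ⟨x, hx.2⟩)
      exact max_le (by linarith) (max_le (by linarith) (by linarith))

end ClosedGraph

section UnitaryGroup

variable {X : Type*} [NormedAddCommGroup X] [InnerProductSpace ℂ X]
  {H : X →ₗ.[ℂ] X} {U : ℝ → X ≃ₗᵢ[ℂ] X}

theorem apply_map_eq_map_apply (hU0 : ∀ x : X, U 0 x = x)
    (hUadd : ∀ (s t : ℝ) (x : X), U (s + t) x = U s (U t x))
    (hUgen : ∀ (ψ : H.domain) (t : ℝ),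
      HasDerivAt (fun s : ℝ => U s (ψ : X)) (-I • U t (H ψ)) t)
    (x : H.domain) (t : ℝ) (hx : U t x ∈ H.domain) : H ⟨U t x, hx⟩ = U t (H x) := by
  have h₁ := hUgen ⟨U t x, hx⟩ 0
  have h₂ : HasDerivAt (fun s => U s (U t x)) (-I • U t (H x)) 0 := by
    simp_rw [← hUadd]
    simpa using (hUgen x (0 + t)).comp_add_const 0 t
  rw [hU0] at h₁
  exact smul_right_injective X (neg_ne_zero.mpr I_ne_zero) (h₁.unique h₂)

theorem continuous_map_apply_of_hasDerivAt (hH : Dense (H.domain : Set X))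
    (hUgen : ∀ (ψ : H.domain) (t : ℝ),
      HasDerivAt (fun s : ℝ => U s (ψ : X)) (-I • U t (H ψ)) t)
    (x : X) : Continuous fun t => U t x :=
  (LipschitzWith.uniformEquicontinuous (fun t x => U t x) 1 fun t => (U t).lipschitz)
    |>.equicontinuous.continuous_apply_of_dense hH
      (fun y hy => continuous_iff_continuousAt.mpr fun t => (hUgen ⟨y, hy⟩ t).continuousAt) x

theorem exists_eventually_norm_apply_map_le [CompleteSpace X] {A : X →ₗ.[ℂ] X}
    (hA : IsSelfAdjoint A) (hH : IsSelfAdjoint H) (hU0 : ∀ x : X, U 0 x = x)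
    (hUadd : ∀ (s t : ℝ) (x : X), U (s + t) x = U s (U t x))
    (hUgen : ∀ (ψ : H.domain) (t : ℝ),
      HasDerivAt (fun s : ℝ => U s (ψ : X)) (-I • U t (H ψ)) t)
    (hInvA : ∀ t, ∀ x ∈ A.domain ⊓ H.domain, U t x ∈ A.domain) {ψ₀ : X}
    (hψ₀ : ψ₀ ∈ A.domain ⊓ H.domain) (hψH : ∀ t, U t ψ₀ ∈ H.domain) (t : ℝ) :
    ∃ M, ∀ᶠ s in 𝓝 t, ‖A ⟨U s ψ₀, hInvA s ψ₀ hψ₀⟩‖ ≤ M := by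
  have hψ : Continuous fun s => U s ψ₀ :=
    continuous_map_apply_of_hasDerivAt hH.dense_domain hUgen ψ₀
  obtain ⟨W, hWo, ⟨c, hc⟩, N, hN⟩ :=
    (hA.lowerSemicontinuous_norm_apply hψ fun s => hInvA s ψ₀ hψ₀).exists_isOpen_forall_le
  obtain ⟨K, hK0, hK⟩ := hA.isClosed.exists_norm_apply_comp_le hH.isClosed
    (U (t - c)).toContinuousLinearEquiv.toContinuousLinearMap (hInvA (t - c))
  have hnear : ∀ᶠ s in 𝓝 t, s - (t - c) ∈ W :=
    (continuous_sub_right (t - c)).continuousAt.preimage_mem_nhds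
      (by simpa using hWo.mem_nhds hc)
  refine ⟨K * (‖ψ₀‖ + N + ‖H ⟨ψ₀, hψ₀.2⟩‖), ?_⟩
  filter_upwards [hnear] with s hs
  obtain ⟨r, hr, rfl⟩ : ∃ r ∈ W, s = t - c + r := ⟨_, hs, by ring⟩
  calc ‖A ⟨U (t - c + r) ψ₀, hInvA _ ψ₀ hψ₀⟩‖
        = ‖A ⟨U (t - c) (U r ψ₀), (hUadd _ _ ψ₀).symm ▸ hInvA _ ψ₀ hψ₀⟩‖ := by
          simp_rw [hUadd]
    _ ≤ K * (‖U r ψ₀‖ + ‖A ⟨U r ψ₀, hInvA r ψ₀ hψ₀⟩‖ + ‖H ⟨U r ψ₀, hψH r⟩‖) :=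
        hK _ ⟨hInvA r ψ₀ hψ₀, hψH r⟩
    _ ≤ K * (‖ψ₀‖ + N + ‖H ⟨ψ₀, hψ₀.2⟩‖) := by
        rw [apply_map_eq_map_apply hU0 hUadd hUgen ⟨ψ₀, hψ₀.2⟩, LinearIsometryEquiv.norm_map,
          LinearIsometryEquiv.norm_map]
        gcongr
        exact hN r hr

end UnitaryGroup

/-- **Sharp Ehrenfest theorem.** `H` and `A` are densely defined self-adjoint operators on a
complex Hilbert space `X`, `U t = e^{-itH}` is the unitary group generated by `H`
(encoded by the group law and the derivative property on `D(H)`), and `U t` leaves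
`D(A) ∩ D(H)` invariant.  Then for `ψ₀ ∈ D(A) ∩ D(H)` the expected value
`t ↦ ⟨ψ(t), A ψ(t)⟩`, `ψ(t) = U t ψ₀`, is continuously differentiable with derivative
`i (⟨Hψ(t), Aψ(t)⟩ - ⟨Aψ(t), Hψ(t)⟩)`. -/
theorem sharp_ehrenfest
    {X : Type*} [NormedAddCommGroup X] [InnerProductSpace ℂ X] [CompleteSpace X]
    (A H : X →ₗ.[ℂ] X)
    (hA : IsSelfAdjoint A) (hH : IsSelfAdjoint H)
    (U : ℝ → X ≃ₗᵢ[ℂ] X)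
    (hU0 : ∀ x : X, U 0 x = x)
    (hUadd : ∀ (s t : ℝ) (x : X), U (s + t) x = U s (U t x))
    (hUgen : ∀ (ψ : H.domain) (t : ℝ),
      HasDerivAt (fun s : ℝ => U s (ψ : X)) (-I • U t (H ψ)) t)
    (hInvA : ∀ (t : ℝ) (x : X), x ∈ A.domain → x ∈ H.domain → U t x ∈ A.domain)
    (hInvH : ∀ (t : ℝ) (x : X), x ∈ A.domain → x ∈ H.domain → U t x ∈ H.domain)
    (ψ₀ : X) (hψ₀A : ψ₀ ∈ A.domain) (hψ₀H : ψ₀ ∈ H.domain) :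
    (∀ t : ℝ, HasDerivAt
        (fun s : ℝ => (inner ℂ (U s ψ₀) (A ⟨U s ψ₀, hInvA s ψ₀ hψ₀A hψ₀H⟩) : ℂ))
        (I * ((inner ℂ (H ⟨U t ψ₀, hInvH t ψ₀ hψ₀A hψ₀H⟩)
                (A ⟨U t ψ₀, hInvA t ψ₀ hψ₀A hψ₀H⟩) : ℂ)
            - (inner ℂ (A ⟨U t ψ₀, hInvA t ψ₀ hψ₀A hψ₀H⟩)
                (H ⟨U t ψ₀, hInvH t ψ₀ hψ₀A hψ₀H⟩) : ℂ))) t)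
    ∧ Continuous (fun t : ℝ =>
        I * ((inner ℂ (H ⟨U t ψ₀, hInvH t ψ₀ hψ₀A hψ₀H⟩)
                (A ⟨U t ψ₀, hInvA t ψ₀ hψ₀A hψ₀H⟩) : ℂ)
            - (inner ℂ (A ⟨U t ψ₀, hInvA t ψ₀ hψ₀A hψ₀H⟩)
                (H ⟨U t ψ₀, hInvH t ψ₀ hψ₀A hψ₀H⟩) : ℂ))) := by
  have hψA : ∀ t, U t ψ₀ ∈ A.domain := fun t => hInvA t ψ₀ hψ₀A hψ₀H
  have hψH : ∀ t, U t ψ₀ ∈ H.domain := fun t => hInvH t ψ₀ hψ₀A hψ₀H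
  have hHψ : ∀ t, H ⟨U t ψ₀, hψH t⟩ = U t (H ⟨ψ₀, hψ₀H⟩) := fun t =>
    apply_map_eq_map_apply hU0 hUadd hUgen ⟨ψ₀, hψ₀H⟩ t (hψH t)
  have hψ : ∀ t, HasDerivAt (fun s => U s ψ₀) (-I • H ⟨U t ψ₀, hψH t⟩) t := fun t => by
    simpa only [hHψ] using hUgen ⟨ψ₀, hψ₀H⟩ t
  have hbdd : ∀ t, ∃ M, ∀ᶠ s in 𝓝 t, ‖A ⟨U s ψ₀, hψA s⟩‖ ≤ M :=
    exists_eventually_norm_apply_map_le hA hH hU0 hUadd hUgen (fun t x hx => hInvA t x hx.1 hx.2)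
      ⟨hψ₀A, hψ₀H⟩ hψH
  have hHψ_cont : Continuous fun t => H ⟨U t ψ₀, hψH t⟩ := by
    simpa only [hHψ] using continuous_map_apply_of_hasDerivAt hH.dense_domain hUgen _
  have hcont := hA.continuous_inner_apply hHψ_cont
    (continuous_map_apply_of_hasDerivAt hH.dense_domain hUgen ψ₀) hψA hbdd
  refine ⟨fun t => ?_, continuous_const.mul (hcont.sub ?_)⟩
  · obtain ⟨M, hM⟩ := hbdd t
    convert hA.hasDerivAt_inner_apply hψA (hψ t) hM using 1
    simp only [inner_smul_left, inner_smul_right, map_neg, conj_I]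
    ring
  · simpa only [Function.comp_def, inner_conj_symm] using continuous_conj.comp hcont
end

section
/- Let H be self-adjoint and A densely defined hermitean (symmetric) on a Hilbert space X. Assume e^{-itH} leaves D(A) ∩ D(H) invariant for all t, and for every ψ₀ ∈ D(A) ∩ D(H) and every bounded interval I ⊂ ℝ, sup_{t∈I} ‖A e^{-itH}ψ₀‖ < ∞. Then for ψ₀ ∈ D(A) ∩ D(H), the map t ↦ ⟨ψ(t), Aψ(t)⟩ with ψ(t) = e^{-itH}ψ₀ is continuously differentiable with derivative i(⟨Hψ(t), Aψ(t)⟩ − ⟨Aψ(t), Hψ(t)⟩). -/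
/-!
With `ψ t = U t ψ₀`, symmetry of `A` turns the difference quotient of `⟪ψ, A ψ⟫` at `t` into
`⟪(ψ s - ψ t)/(s - t), A ψ s⟫ + ⟪A ψ t, (ψ s - ψ t)/(s - t)⟫`. The quotients converge in norm,
and `A ψ s` stays locally bounded and converges weakly: against `φ` in the dense domain of `A`,
`⟪φ, A ψ s⟫ = ⟪A φ, ψ s⟫`. A norm-convergent family paired with a bounded weakly convergent
one converges, which gives the derivative; since `H ψ t = U t (H ψ₀)` is strongly continuous, the
same pairing shows that the derivative is continuous.
-/

open Complex Filter Topology Set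
open scoped InnerProductSpace

section WeakConvergence

variable {α X : Type*} [NormedAddCommGroup X] [InnerProductSpace ℂ X] {l : Filter α}
  {G : α → X} {g : X}

/-- On a bounded set the functionals `⟪·, y⟫` are equi-Lipschitz, so the set of `v` along which
`⟪v, G a⟫ → ⟪v, g⟫` is closed. -/
lemma tendsto_inner_of_dense_of_isBoundedUnder (hG : IsBoundedUnder (· ≤ ·) l (‖G ·‖))
    {S : Set X} (hS : Dense S) (hGS : ∀ φ ∈ S, Tendsto (fun a => ⟪φ, G a⟫_ℂ) l (𝓝 ⟪φ, g⟫_ℂ))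
    (v : X) : Tendsto (fun a => ⟪v, G a⟫_ℂ) l (𝓝 ⟪v, g⟫_ℂ) := by
  obtain ⟨C, hC⟩ := hG
  set s := {a | ‖G a‖ ≤ C}
  have hs : range ((↑) : s → α) ∈ l := by rw [Subtype.range_coe]; exact hC
  have hequi : Equicontinuous fun (a : s) (v : X) => ⟪v, G a⟫_ℂ := by
    refine (LipschitzWith.uniformEquicontinuous _ C.toNNReal fun a =>
      LipschitzWith.of_dist_le_mul fun x y => ?_).equicontinuous
    rw [dist_eq_norm, dist_eq_norm, ← inner_sub_left, mul_comm]
    exact (norm_inner_le_norm _ _).trans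
      (mul_le_mul_of_nonneg_left (a.2.trans (Real.le_coe_toNNReal C)) (norm_nonneg _))
  have hclosed := hequi.isClosed_setOfPred_tendsto (l := comap (↑) l)
    (f := fun v => ⟪v, g⟫_ℂ) (continuous_id.inner continuous_const)
  exact (tendsto_comap'_iff hs).1 <|
    hclosed.closure_subset_iff.2 (fun φ hφ => (tendsto_comap'_iff hs).2 (hGS φ hφ)) (hS v)

lemma Filter.Tendsto.inner_of_isBoundedUnder_of_weak {F : α → X} {f : X}
    (hF : Tendsto F l (𝓝 f)) (hG : IsBoundedUnder (· ≤ ·) l (‖G ·‖))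
    (hGw : ∀ v, Tendsto (fun a => ⟪v, G a⟫_ℂ) l (𝓝 ⟪v, g⟫_ℂ)) :
    Tendsto (fun a => ⟪F a, G a⟫_ℂ) l (𝓝 ⟪f, g⟫_ℂ) := by
  have hsmall : Tendsto (fun a => ⟪F a - f, G a⟫_ℂ) l (𝓝 0) :=
    (tendsto_sub_nhds_zero_iff.2 hF).op_zero_isBoundedUnder_le hG _ norm_inner_le_norm
  simpa [inner_sub_left] using hsmall.add (hGw f)

/-- The symmetry relation moves the increment of the merely weakly continuous `G` onto the
differentiable `ψ`. -/
lemma hasDerivAt_inner_of_symm {ψ G : ℝ → X} {t : ℝ} {v : X} (hψ : HasDerivAt ψ v t)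
    (hG : IsBoundedUnder (· ≤ ·) (𝓝 t) (‖G ·‖))
    (hGw : ∀ u, Tendsto (fun s => ⟪u, G s⟫_ℂ) (𝓝 t) (𝓝 ⟪u, G t⟫_ℂ))
    (hsymm : ∀ s, ⟪ψ t, G s - G t⟫_ℂ = ⟪G t, ψ s - ψ t⟫_ℂ) :
    HasDerivAt (fun s => ⟪ψ s, G s⟫_ℂ) (⟪v, G t⟫_ℂ + ⟪G t, v⟫_ℂ) t := by
  rw [hasDerivAt_iff_tendsto_slope] at hψ ⊢
  have hslope : ∀ s, ⟪slope ψ t s, G s⟫_ℂ + ⟪G t, slope ψ t s⟫_ℂ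
      = slope (fun s => ⟪ψ s, G s⟫_ℂ) t s := by
    intro s
    have hdiff : ⟪ψ s, G s⟫_ℂ - ⟪ψ t, G t⟫_ℂ = ⟪ψ s - ψ t, G s⟫_ℂ + ⟪G t, ψ s - ψ t⟫_ℂ := by
      rw [← hsymm, inner_sub_left, inner_sub_right]; ring
    simp only [slope_def_module, hdiff, smul_add, RCLike.real_smul_eq_coe_smul (K := ℂ),
      inner_smul_real_left, inner_smul_real_right]
  exact ((hψ.inner_of_isBoundedUnder_of_weak (hG.mono nhdsWithin_le_nhds) fun u =>
    (hGw u).mono_left nhdsWithin_le_nhds).add (tendsto_const_nhds.inner hψ)).congr hslope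

end WeakConvergence

lemma continuous_apply_of_dense {α 𝕜 E : Type*} [TopologicalSpace α] [NormedField 𝕜]
    [SeminormedAddCommGroup E] [NormedSpace 𝕜 E] (U : α → E ≃ₗᵢ[𝕜] E) {S : Set E}
    (hS : Dense S) (hU : ∀ y ∈ S, Continuous fun a => U a y) (x : E) :
    Continuous fun a => U a x := by
  refine continuous_iff_continuousAt.2 fun a => ?_
  have hequi : Equicontinuous fun b (y : E) => U b y :=
    (LipschitzWith.uniformEquicontinuous _ 1 fun b => (U b).lipschitz).equicontinuous
  have hclosed := hequi.isClosed_setOfPred_tendsto (l := 𝓝 a) (U a).continuous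
  exact hclosed.closure_subset_iff.2 (fun y hy => (hU y hy).continuousAt) (hS x)

/-- Differentiating `s ↦ U s (U t ψ) = U (s + t) ψ` at `s = 0` in two ways. -/
lemma generator_apply_orbit {X : Type*} [NormedAddCommGroup X] [InnerProductSpace ℂ X]
    {H : X →ₗ.[ℂ] X} {U : ℝ → X ≃ₗᵢ[ℂ] X}
    (hUadd : ∀ (s t : ℝ) (x : X), U (s + t) x = U s (U t x))
    (hUgen : ∀ (ψ : H.domain) (t : ℝ), HasDerivAt (fun s : ℝ => U s (ψ : X)) (-I • U t (H ψ)) t)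
    (ψ : H.domain) (t : ℝ) (h : U t ψ ∈ H.domain) :
    H ⟨U t ψ, h⟩ = U t (H ψ) := by
  have hshift : HasDerivAt (fun s : ℝ => U s (U t ψ)) (-I • U (0 + t) (H ψ)) 0 := by
    simpa only [hUadd] using (hUgen ψ (0 + t)).comp_add_const 0 t
  have hsame := (hUgen ⟨U t ψ, h⟩ 0).unique hshift
  rw [hUadd, smul_right_injective X (neg_ne_zero.2 I_ne_zero) |>.eq_iff] at hsame
  exact (U 0).injective hsame

theorem ehrenfest_of_locally_bounded_general
    {X : Type*} [NormedAddCommGroup X] [InnerProductSpace ℂ X] [CompleteSpace X]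
    (A H : X →ₗ.[ℂ] X)
    (hH : IsSelfAdjoint H)
    (hAdense : Dense (A.domain : Set X))
    (hAsym : ∀ x y : A.domain, (inner ℂ (A x) (y : X) : ℂ) = inner ℂ (x : X) (A y))
    (U : ℝ → X ≃ₗᵢ[ℂ] X)
    (hUadd : ∀ (s t : ℝ) (x : X), U (s + t) x = U s (U t x))
    (hUgen : ∀ (ψ : H.domain) (t : ℝ),
      HasDerivAt (fun s : ℝ => U s (ψ : X)) (-I • U t (H ψ)) t)
    (hInvA : ∀ (t : ℝ) (x : X), x ∈ A.domain → x ∈ H.domain → U t x ∈ A.domain)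
    (hInvH : ∀ (t : ℝ) (x : X), x ∈ A.domain → x ∈ H.domain → U t x ∈ H.domain)
    (hbd : ∀ (ψ : X) (hψA : ψ ∈ A.domain) (hψH : ψ ∈ H.domain) (I' : Set ℝ),
      Bornology.IsBounded I' →
      ∃ C : ℝ, ∀ t ∈ I', ‖A ⟨U t ψ, hInvA t ψ hψA hψH⟩‖ ≤ C)
    (ψ₀ : X) (hψ₀A : ψ₀ ∈ A.domain) (hψ₀H : ψ₀ ∈ H.domain) :
    (∀ t : ℝ, HasDerivAt
        (fun s : ℝ => (inner ℂ (U s ψ₀) (A ⟨U s ψ₀, hInvA s ψ₀ hψ₀A hψ₀H⟩) : ℂ))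
        (I * ((inner ℂ (H ⟨U t ψ₀, hInvH t ψ₀ hψ₀A hψ₀H⟩)
                (A ⟨U t ψ₀, hInvA t ψ₀ hψ₀A hψ₀H⟩) : ℂ)
            - (inner ℂ (A ⟨U t ψ₀, hInvA t ψ₀ hψ₀A hψ₀H⟩)
                (H ⟨U t ψ₀, hInvH t ψ₀ hψ₀A hψ₀H⟩) : ℂ))) t)
    ∧ Continuous (fun t : ℝ =>
        I * ((inner ℂ (H ⟨U t ψ₀, hInvH t ψ₀ hψ₀A hψ₀H⟩)
                (A ⟨U t ψ₀, hInvA t ψ₀ hψ₀A hψ₀H⟩) : ℂ)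
            - (inner ℂ (A ⟨U t ψ₀, hInvA t ψ₀ hψ₀A hψ₀H⟩)
                (H ⟨U t ψ₀, hInvH t ψ₀ hψ₀A hψ₀H⟩) : ℂ))) := by
  set G : ℝ → X := fun s => A ⟨U s ψ₀, hInvA s ψ₀ hψ₀A hψ₀H⟩
  have hψ : ∀ t, HasDerivAt (fun s => U s ψ₀) (-I • U t (H ⟨ψ₀, hψ₀H⟩)) t :=
    hUgen ⟨ψ₀, hψ₀H⟩
  have horbit : ∀ y ∈ H.domain, Continuous fun t => U t y := fun y hy =>
    continuous_iff_continuousAt.2 fun t => (hUgen ⟨y, hy⟩ t).continuousAt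
  have hHψ : ∀ t, H ⟨U t ψ₀, hInvH t ψ₀ hψ₀A hψ₀H⟩ = U t (H ⟨ψ₀, hψ₀H⟩) := fun t =>
    generator_apply_orbit hUadd hUgen ⟨ψ₀, hψ₀H⟩ t _
  have hGbdd : ∀ t, IsBoundedUnder (· ≤ ·) (𝓝 t) (‖G ·‖) := fun t => by
    obtain ⟨C, hC⟩ := hbd ψ₀ hψ₀A hψ₀H _ (Metric.isBounded_ball (x := t) (r := 1))
    exact isBoundedUnder_of_eventually_le (eventually_of_mem (Metric.ball_mem_nhds t one_pos) hC)
  have hGweak : ∀ t u, Tendsto (fun s => ⟪u, G s⟫_ℂ) (𝓝 t) (𝓝 ⟪u, G t⟫_ℂ) := fun t =>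
    tendsto_inner_of_dense_of_isBoundedUnder (hGbdd t) hAdense fun φ hφ => by
      simp only [G, ← hAsym ⟨φ, hφ⟩]
      exact (continuous_const.inner (horbit ψ₀ hψ₀H)).tendsto t
  have hUHψ₀ : Continuous fun t => U t (H ⟨ψ₀, hψ₀H⟩) :=
    continuous_apply_of_dense U hH.dense_domain horbit _
  have hpair : Continuous fun t => ⟪U t (H ⟨ψ₀, hψ₀H⟩), G t⟫_ℂ :=
    continuous_iff_continuousAt.2 fun t =>
      (hUHψ₀.tendsto t).inner_of_isBoundedUnder_of_weak (hGbdd t) (hGweak t)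
  simp only [hHψ]
  refine ⟨fun t => ?_, ?_⟩
  · convert hasDerivAt_inner_of_symm (hψ t) (hGbdd t) (hGweak t) (fun s => ?_) using 1
    · simp only [inner_smul_left, inner_smul_right, map_neg, conj_I, neg_neg, G]
      ring
    · simp only [G, ← LinearPMap.map_sub]
      exact (hAsym ⟨U t ψ₀, _⟩ (⟨U s ψ₀, hInvA s ψ₀ hψ₀A hψ₀H⟩ - ⟨U t ψ₀, _⟩)).symm
  · have hpair' := continuous_conj.comp hpair
    simp only [Function.comp_def, inner_conj_symm] at hpair'
    exact continuous_const.mul (hpair.sub hpair')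

/-- **Ehrenfest theorem under a priori bounds (Proposition 1).**  `H` self-adjoint, `A` densely
defined hermitean (symmetric), `U t = e^{-itH}` leaves `D(A) ∩ D(H)` invariant, and for every
`ψ₀ ∈ D(A) ∩ D(H)` the function `t ↦ ‖A U t ψ₀‖` is bounded on bounded intervals.  Then
`t ↦ ⟨ψ(t), A ψ(t)⟩` is continuously differentiable with derivative
`i (⟨Hψ(t), Aψ(t)⟩ - ⟨Aψ(t), Hψ(t)⟩)`. -/
theorem ehrenfest_of_locally_bounded
    {X : Type*} [NormedAddCommGroup X] [InnerProductSpace ℂ X] [CompleteSpace X]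
    (A H : X →ₗ.[ℂ] X)
    (hH : IsSelfAdjoint H)
    (hAdense : Dense (A.domain : Set X))
    (hAsym : ∀ x y : A.domain, (inner ℂ (A x) (y : X) : ℂ) = inner ℂ (x : X) (A y))
    (U : ℝ → X ≃ₗᵢ[ℂ] X)
    (hU0 : ∀ x : X, U 0 x = x)
    (hUadd : ∀ (s t : ℝ) (x : X), U (s + t) x = U s (U t x))
    (hUgen : ∀ (ψ : H.domain) (t : ℝ),
      HasDerivAt (fun s : ℝ => U s (ψ : X)) (-I • U t (H ψ)) t)
    (hInvA : ∀ (t : ℝ) (x : X), x ∈ A.domain → x ∈ H.domain → U t x ∈ A.domain)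
    (hInvH : ∀ (t : ℝ) (x : X), x ∈ A.domain → x ∈ H.domain → U t x ∈ H.domain)
    (hbd : ∀ (ψ : X) (hψA : ψ ∈ A.domain) (hψH : ψ ∈ H.domain) (I' : Set ℝ),
      Bornology.IsBounded I' →
      ∃ C : ℝ, ∀ t ∈ I', ‖A ⟨U t ψ, hInvA t ψ hψA hψH⟩‖ ≤ C)
    (ψ₀ : X) (hψ₀A : ψ₀ ∈ A.domain) (hψ₀H : ψ₀ ∈ H.domain) :
    (∀ t : ℝ, HasDerivAt
        (fun s : ℝ => (inner ℂ (U s ψ₀) (A ⟨U s ψ₀, hInvA s ψ₀ hψ₀A hψ₀H⟩) : ℂ))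
        (I * ((inner ℂ (H ⟨U t ψ₀, hInvH t ψ₀ hψ₀A hψ₀H⟩)
                (A ⟨U t ψ₀, hInvA t ψ₀ hψ₀A hψ₀H⟩) : ℂ)
            - (inner ℂ (A ⟨U t ψ₀, hInvA t ψ₀ hψ₀A hψ₀H⟩)
                (H ⟨U t ψ₀, hInvH t ψ₀ hψ₀A hψ₀H⟩) : ℂ))) t)
    ∧ Continuous (fun t : ℝ =>
        I * ((inner ℂ (H ⟨U t ψ₀, hInvH t ψ₀ hψ₀A hψ₀H⟩)
                (A ⟨U t ψ₀, hInvA t ψ₀ hψ₀A hψ₀H⟩) : ℂ)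
            - (inner ℂ (A ⟨U t ψ₀, hInvA t ψ₀ hψ₀A hψ₀H⟩)
                (H ⟨U t ψ₀, hInvH t ψ₀ hψ₀A hψ₀H⟩) : ℂ))) :=
  ehrenfest_of_locally_bounded_general A H hH hAdense hAsym U hUadd hUgen hInvA hInvH hbd ψ₀ hψ₀A
    hψ₀H
end

section
/- Let H be self-adjoint and A a closed, densely defined hermitean operator on a Hilbert space X, and suppose T(t) := e^{-itH} leaves D(A) ∩ D(H) invariant for all t ∈ ℝ. Then for every ψ₀ ∈ D(A) ∩ D(H) and every bounded interval I ⊂ ℝ, sup_{t∈I} ‖A T(t)ψ₀‖ < ∞. -/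
/-!
Let `V t` act on the joint graph `{(x, A x, H x)}` of `A` and `H` by `x ↦ U t x`; the graph is a
Banach space because `A` and `H` are closed. Each `V t` is bounded by the closed graph theorem,
and `t ↦ ‖V t‖` is submultiplicative. It is also lower semicontinuous: `‖U t x‖` is constant,
while `‖A U t x‖ = sup {|⟪A φ, U t x⟫| : φ ∈ D(A), ‖φ‖ ≤ 1}` (and likewise for `H`) is a supremum of
continuous functions of `t`. By Baire, `‖V t‖` is bounded on some open interval, hence near `0` by
submultiplicativity, hence on every bounded interval; and `‖A U t ψ₀‖ ≤ ‖V t‖ ‖(ψ₀, Aψ₀, Hψ₀)‖`.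
-/

open Complex Set Metric

theorem lowerSemicontinuous_of_isClosed_le {α : Type*} [TopologicalSpace α] {f : α → ℝ}
    (hf : ∀ a, 0 ≤ f a) (h : ∀ M, 0 ≤ M → IsClosed {a | f a ≤ M}) : LowerSemicontinuous f := by
  refine lowerSemicontinuous_iff_isClosed_preimage.mpr fun M => ?_
  rcases lt_or_ge M 0 with hM | hM
  · convert isClosed_empty
    exact eq_empty_of_forall_notMem fun a ha => (hf a).not_gt (ha.out.trans_lt hM)
  · exact h M hM

theorem ContinuousLinearMap.lowerSemicontinuous_norm {α 𝕜 E F : Type*} [TopologicalSpace α]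
    [NontriviallyNormedField 𝕜] [SeminormedAddCommGroup E] [NormedSpace 𝕜 E]
    [SeminormedAddCommGroup F] [NormedSpace 𝕜 F] {V : α → E →L[𝕜] F}
    (hV : ∀ x, LowerSemicontinuous fun a => ‖V a x‖) : LowerSemicontinuous fun a => ‖V a‖ := by
  refine lowerSemicontinuous_of_isClosed_le (fun a => norm_nonneg _) fun M hM => ?_
  have hset : {a | ‖V a‖ ≤ M} = ⋂ x, (fun a => ‖V a x‖) ⁻¹' Iic (M * ‖x‖) := by
    ext a
    simp [ContinuousLinearMap.opNorm_le_iff hM]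
  rw [hset]
  exact isClosed_iInter fun x => (hV x).isClosed_preimage _

theorem LowerSemicontinuous.exists_isOpen_bddAbove {α : Type*} [TopologicalSpace α]
    [BaireSpace α] [Nonempty α] {f : α → ℝ} (hf : LowerSemicontinuous f) :
    ∃ U, IsOpen U ∧ U.Nonempty ∧ BddAbove (f '' U) := by
  have hcover : ⋃ n : ℕ, f ⁻¹' Iic (n : ℝ) = univ :=
    eq_univ_of_forall fun a => mem_iUnion.mpr (exists_nat_ge (f a))
  obtain ⟨n, hn⟩ :=
    nonempty_interior_of_iUnion_of_closed (fun n : ℕ => hf.isClosed_preimage n) hcover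
  exact ⟨_, isOpen_interior, hn, (n : ℝ),
    forall_mem_image.mpr fun a ha => mem_Iic.mp (mem_preimage.mp (interior_subset ha))⟩

section Submultiplicative

variable {f : ℝ → ℝ} (hf0 : ∀ t, 0 ≤ f t) (hmul : ∀ s t, f (s + t) ≤ f s * f t)
include hf0 hmul

theorem bddAbove_image_of_bddAbove_image_ball {ε : ℝ} (hε : 0 < ε)
    (hball : BddAbove (f '' ball 0 ε)) {s : Set ℝ} (hs : Bornology.IsBounded s) :
    BddAbove (f '' s) := by
  obtain ⟨M, hM⟩ := hball
  have hpow : ∀ (n : ℕ) (r : ℝ), f ((n + 1) * r) ≤ f r ^ (n + 1) := by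
    intro n r
    induction n with
    | zero => simp
    | succ n ih =>
      calc f ((↑(n + 1) + 1) * r) = f ((n + 1) * r + r) := by push_cast; ring_nf
        _ ≤ f ((n + 1) * r) * f r := hmul _ _
        _ ≤ f r ^ (n + 1) * f r := by gcongr; exact hf0 r
        _ = f r ^ (n + 1 + 1) := by ring
  obtain ⟨R, hR⟩ := hs.subset_closedBall 0
  obtain ⟨n, hn⟩ := exists_nat_gt (R / ε)
  refine ⟨M ^ (n + 1), forall_mem_image.mpr fun t ht => ?_⟩
  have hn1 : (0 : ℝ) < n + 1 := by positivity
  have hsmall : t / (n + 1) ∈ ball (0 : ℝ) ε := by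
    have htR : |t| ≤ R := by simpa [Real.dist_eq] using hR ht
    rw [mem_ball, Real.dist_eq, sub_zero, abs_div, abs_of_pos hn1, div_lt_iff₀ hn1]
    rw [div_lt_iff₀ hε] at hn
    linarith
  calc f t = f ((n + 1) * (t / (n + 1))) := by rw [mul_div_cancel₀ _ hn1.ne']
    _ ≤ f (t / (n + 1)) ^ (n + 1) := hpow n _
    _ ≤ M ^ (n + 1) := by gcongr; exacts [hf0 _, hM (mem_image_of_mem f hsmall)]

theorem LowerSemicontinuous.bddAbove_image_of_le_mul (hf : LowerSemicontinuous f)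
    {s : Set ℝ} (hs : Bornology.IsBounded s) : BddAbove (f '' s) := by
  obtain ⟨U, hUo, ⟨t₀, ht₀⟩, M, hM⟩ := hf.exists_isOpen_bddAbove
  obtain ⟨ε, hε, hball⟩ := Metric.isOpen_iff.mp hUo t₀ ht₀
  refine bddAbove_image_of_bddAbove_image_ball hf0 hmul hε ⟨M * f (-t₀), ?_⟩ hs
  refine forall_mem_image.mpr fun r hr => ?_
  have hrt : r + t₀ ∈ U := hball (by simpa [Real.dist_eq] using hr)
  calc f r = f ((r + t₀) + -t₀) := by ring_nf
    _ ≤ f (r + t₀) * f (-t₀) := hmul _ _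
    _ ≤ M * f (-t₀) := by gcongr; exacts [hf0 _, hM (mem_image_of_mem f hrt)]

end Submultiplicative

namespace LinearPMap

section Algebraic

variable {R E F G : Type*} [Ring R] [AddCommGroup E] [Module R E] [AddCommGroup F] [Module R F]
  [AddCommGroup G] [Module R G]

def prod (f : E →ₗ.[R] F) (g : E →ₗ.[R] G) : E →ₗ.[R] F × G where
  domain := f.domain ⊓ g.domain
  toFun := (f.toFun ∘ₗ Submodule.inclusion inf_le_left).prod
    (g.toFun ∘ₗ Submodule.inclusion inf_le_right)

theorem mem_graph_prod_iff {f : E →ₗ.[R] F} {g : E →ₗ.[R] G} {p : E × F × G} :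
    p ∈ (f.prod g).graph ↔ (p.1, p.2.1) ∈ f.graph ∧ (p.1, p.2.2) ∈ g.graph := by
  simp only [mem_graph_iff]
  constructor
  · rintro ⟨x, hx, hfx⟩
    exact ⟨⟨⟨x, x.2.1⟩, hx, congrArg Prod.fst hfx⟩, ⟨⟨x, x.2.2⟩, hx, congrArg Prod.snd hfx⟩⟩
  · rintro ⟨⟨y, hy, hfy⟩, ⟨z, hz, hgz⟩⟩
    refine ⟨⟨p.1, hy ▸ y.2, hz ▸ z.2⟩, rfl, Prod.ext ?_ ?_⟩
    · rw [← hfy]; exact congrArg f (Subtype.ext hy.symm)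
    · rw [← hgz]; exact congrArg g (Subtype.ext hz.symm)

variable (f : E →ₗ.[R] F)

theorem graph_ext {p q : f.graph} (h : (p : E × F).1 = (q : E × F).1) : p = q :=
  Subtype.ext (Prod.ext h (f.mem_graph_snd_inj' p.2 q.2 h))

/-- The action `(x, f x) ↦ (T x, f (T x))` on the graph of `f` of an operator `T` preserving
`f.domain`. -/
def graphMap (T : E →ₗ[R] E) (hT : ∀ x ∈ f.domain, T x ∈ f.domain) : f.graph →ₗ[R] f.graph :=
  ((f.domain.subtype.prod f.toFun).codRestrict f.graph f.mem_graph) ∘ₗ T.restrict hT ∘ₗ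
    ((LinearMap.fst R E F ∘ₗ f.graph.subtype).codRestrict f.domain
      fun p => mem_domain_of_mem_graph p.2)

end Algebraic

section Normed

variable {𝕜 E F G : Type*} [NontriviallyNormedField 𝕜] [NormedAddCommGroup E] [NormedSpace 𝕜 E]
  [NormedAddCommGroup F] [NormedSpace 𝕜 F] [NormedAddCommGroup G] [NormedSpace 𝕜 G]

theorem IsClosed.prod {f : E →ₗ.[𝕜] F} {g : E →ₗ.[𝕜] G} (hf : f.IsClosed) (hg : g.IsClosed) :
    (f.prod g).IsClosed := by
  have hgraph : ((f.prod g).graph : Set (E × F × G)) =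
      (fun p => (p.1, p.2.1)) ⁻¹' f.graph ∩ (fun p => (p.1, p.2.2)) ⁻¹' g.graph := by
    ext p
    exact mem_graph_prod_iff
  change _root_.IsClosed _
  rw [hgraph]
  exact (hf.preimage (by fun_prop)).inter (hg.preimage (by fun_prop))

variable {f : E →ₗ.[𝕜] F}

theorem isClosed_graph_graphMap (T : E →L[𝕜] E) (hT : ∀ x ∈ f.domain, T x ∈ f.domain) :
    _root_.IsClosed ((f.graphMap T.toLinearMap hT).graph : Set (f.graph × f.graph)) := by
  have hgraph : ((f.graphMap T.toLinearMap hT).graph : Set (f.graph × f.graph)) =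
      {pq | (pq.2 : E × F).1 = T (pq.1 : E × F).1} := by
    ext pq
    simp only [SetLike.mem_coe, LinearMap.mem_graph_iff, Set.mem_ofPred_eq]
    exact ⟨fun h => h ▸ rfl, fun h => f.graph_ext h⟩
  rw [hgraph]
  exact isClosed_eq (by fun_prop) (by fun_prop)

variable [CompleteSpace E] [CompleteSpace F]

noncomputable def graphMapL (hf : f.IsClosed) (T : E →L[𝕜] E)
    (hT : ∀ x ∈ f.domain, T x ∈ f.domain) : f.graph →L[𝕜] f.graph :=
  haveI := _root_.IsClosed.completeSpace_coe (hs := hf)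
  ⟨f.graphMap T.toLinearMap hT,
    LinearMap.continuous_of_isClosed_graph _ (isClosed_graph_graphMap T hT)⟩

theorem graphMapL_comp (hf : f.IsClosed) {R S T : E →L[𝕜] E}
    (hR : ∀ x ∈ f.domain, R x ∈ f.domain) (hS : ∀ x ∈ f.domain, S x ∈ f.domain)
    (hT : ∀ x ∈ f.domain, T x ∈ f.domain) (hRST : ∀ x, R x = S (T x)) :
    graphMapL hf R hR = (graphMapL hf S hS).comp (graphMapL hf T hT) :=
  ContinuousLinearMap.ext fun _ => f.graph_ext (hRST _)

end Normed

section InnerProduct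

variable {𝕜 E F : Type*} [RCLike 𝕜] [NormedAddCommGroup E] [InnerProductSpace 𝕜 E]
  [NormedAddCommGroup F] [InnerProductSpace 𝕜 F] {T : E →ₗ.[𝕜] F} {S : F →ₗ.[𝕜] E}

theorem IsFormalAdjoint.norm_apply_le (hT : Dense (T.domain : Set E)) (hTS : T.IsFormalAdjoint S)
    (y : S.domain) {M : ℝ} (hM : 0 ≤ M)
    (h : ∀ x : T.domain, ‖inner 𝕜 (T x) (y : F)‖ ≤ M * ‖(x : E)‖) : ‖S y‖ ≤ M := by
  have hbound : ∀ z : E, ‖inner 𝕜 z (S y)‖ ≤ M * ‖z‖ := fun z =>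
    hT.induction (fun x hx => hTS ⟨x, hx⟩ y ▸ h ⟨x, hx⟩)
      (isClosed_le (by fun_prop) (by fun_prop)) z
  have hsq : ‖S y‖ ^ 2 ≤ M * ‖S y‖ := by
    calc ‖S y‖ ^ 2 = RCLike.re (inner 𝕜 (S y) (S y)) := (inner_self_eq_norm_sq _).symm
      _ ≤ ‖inner 𝕜 (S y) (S y)‖ := RCLike.re_le_norm _
      _ ≤ M * ‖S y‖ := hbound _
  nlinarith [norm_nonneg (S y)]

theorem IsFormalAdjoint.lowerSemicontinuous_norm_apply (hT : Dense (T.domain : Set E))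
    (hTS : T.IsFormalAdjoint S) : LowerSemicontinuous fun y : S.domain => ‖S y‖ := by
  refine lowerSemicontinuous_of_isClosed_le (fun y => norm_nonneg _) fun M hM => ?_
  have hset : {y : S.domain | ‖S y‖ ≤ M} =
      ⋂ x : T.domain, {y : S.domain | ‖inner 𝕜 (T x) (y : F)‖ ≤ M * ‖(x : E)‖} := by
    ext y
    simp only [Set.mem_iInter, Set.mem_ofPred_eq]
    refine ⟨fun hy x => ?_, hTS.norm_apply_le hT y hM⟩
    calc ‖inner 𝕜 (T x) (y : F)‖ = ‖inner 𝕜 (x : E) (S y)‖ := by rw [hTS x y]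
      _ ≤ ‖(x : E)‖ * ‖S y‖ := norm_inner_le_norm _ _
      _ ≤ M * ‖(x : E)‖ := by rw [mul_comm]; gcongr
  rw [hset]
  exact isClosed_iInter fun x => isClosed_le (by fun_prop) (by fun_prop)

theorem _root_.IsSelfAdjoint.isFormalAdjoint_s2 [CompleteSpace E] {A : E →ₗ.[𝕜] E}
    (hA : IsSelfAdjoint A) : A.IsFormalAdjoint A := by
  simpa only [isSelfAdjoint_def.mp hA] using adjoint_isFormalAdjoint hA.dense_domain

end InnerProduct

end LinearPMap

open LinearPMap in
theorem locally_bounded_of_closed_general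
    {X : Type*} [NormedAddCommGroup X] [InnerProductSpace ℂ X] [CompleteSpace X]
    (A H : X →ₗ.[ℂ] X)
    (hH : IsSelfAdjoint H)
    (hAdense : Dense (A.domain : Set X))
    (hAsym : ∀ x y : A.domain, (inner ℂ (A x) (y : X) : ℂ) = inner ℂ (x : X) (A y))
    (hAclosed : A.IsClosed)
    (U : ℝ → X ≃ₗᵢ[ℂ] X)
    (hUadd : ∀ (s t : ℝ) (x : X), U (s + t) x = U s (U t x))
    (hUgen : ∀ (ψ : H.domain) (t : ℝ),
      HasDerivAt (fun s : ℝ => U s (ψ : X)) (-I • U t (H ψ)) t)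
    (hInvA : ∀ (t : ℝ) (x : X), x ∈ A.domain → x ∈ H.domain → U t x ∈ A.domain)
    (hInvH : ∀ (t : ℝ) (x : X), x ∈ A.domain → x ∈ H.domain → U t x ∈ H.domain)
    (ψ₀ : X) (hψ₀A : ψ₀ ∈ A.domain) (hψ₀H : ψ₀ ∈ H.domain) :
    ∀ I' : Set ℝ, Bornology.IsBounded I' →
      ∃ C : ℝ, ∀ t ∈ I', ‖A ⟨U t ψ₀, hInvA t ψ₀ hψ₀A hψ₀H⟩‖ ≤ C := by
  intro I' hI'
  have hJ : (A.prod H).IsClosed := hAclosed.prod hH.isClosed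
  have hUJ (t : ℝ) : ∀ x ∈ (A.prod H).domain, U t x ∈ (A.prod H).domain :=
    fun x hx => ⟨hInvA t x hx.1 hx.2, hInvH t x hx.1 hx.2⟩
  let V (t : ℝ) := graphMapL hJ (U t : X →L[ℂ] X) (hUJ t)
  have hV_mul (s t : ℝ) : ‖V (s + t)‖ ≤ ‖V s‖ * ‖V t‖ := by
    rw [show V (s + t) = (V s).comp (V t) from graphMapL_comp hJ _ _ _ (hUadd s t)]
    exact (V s).opNorm_comp_le (V t)
  have horbit {x : X} (hx : x ∈ H.domain) : Continuous fun t => U t x :=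
    continuous_iff_continuousAt.mpr fun t => (hUgen ⟨x, hx⟩ t).continuousAt
  have hV_lsc : LowerSemicontinuous fun t => ‖V t‖ := by
    refine ContinuousLinearMap.lowerSemicontinuous_norm fun p => ?_
    obtain ⟨hpA, hpH⟩ := mem_domain_of_mem_graph p.2
    have hlscA := (IsFormalAdjoint.lowerSemicontinuous_norm_apply hAdense hAsym).comp
      ((horbit hpH).subtype_mk fun t => hInvA t _ hpA hpH)
    have hlscH := (hH.isFormalAdjoint_s2.lowerSemicontinuous_norm_apply hH.dense_domain).comp
      ((horbit hpH).subtype_mk fun t => hInvH t _ hpA hpH)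
    -- `‖V t p‖` unfolds to `‖U t x‖ ⊔ (‖A (U t x)‖ ⊔ ‖H (U t x)‖)` with `x = p.1.1`
    exact (continuous_norm.comp (horbit hpH)).lowerSemicontinuous.sup (hlscA.sup hlscH)
  obtain ⟨C, hC⟩ := hV_lsc.bddAbove_image_of_le_mul (fun t => norm_nonneg (V t)) hV_mul hI'
  let p₀ : (A.prod H).graph := ⟨_, (A.prod H).mem_graph ⟨ψ₀, hψ₀A, hψ₀H⟩⟩
  refine ⟨C * ‖p₀‖, fun t ht => ?_⟩
  calc ‖A ⟨U t ψ₀, _⟩‖ ≤ ‖V t p₀‖ := le_sup_left.trans le_sup_right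
    _ ≤ ‖V t‖ * ‖p₀‖ := (V t).le_opNorm p₀
    _ ≤ C * ‖p₀‖ := by gcongr; exact hC (mem_image_of_mem _ ht)

/-- **Proposition 2.** `H` self-adjoint, `A` closed, densely defined and hermitean, and the
unitary group `U t = e^{-itH}` leaves `D(A) ∩ D(H)` invariant.  Then for every
`ψ₀ ∈ D(A) ∩ D(H)`, `t ↦ ‖A U t ψ₀‖` is bounded on every bounded interval. -/
theorem locally_bounded_of_closed
    {X : Type*} [NormedAddCommGroup X] [InnerProductSpace ℂ X] [CompleteSpace X]
    (A H : X →ₗ.[ℂ] X)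
    (hH : IsSelfAdjoint H)
    (hAdense : Dense (A.domain : Set X))
    (hAsym : ∀ x y : A.domain, (inner ℂ (A x) (y : X) : ℂ) = inner ℂ (x : X) (A y))
    (hAclosed : A.IsClosed)
    (U : ℝ → X ≃ₗᵢ[ℂ] X)
    (hU0 : ∀ x : X, U 0 x = x)
    (hUadd : ∀ (s t : ℝ) (x : X), U (s + t) x = U s (U t x))
    (hUgen : ∀ (ψ : H.domain) (t : ℝ),
      HasDerivAt (fun s : ℝ => U s (ψ : X)) (-I • U t (H ψ)) t)
    (hInvA : ∀ (t : ℝ) (x : X), x ∈ A.domain → x ∈ H.domain → U t x ∈ A.domain)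
    (hInvH : ∀ (t : ℝ) (x : X), x ∈ A.domain → x ∈ H.domain → U t x ∈ H.domain)
    (ψ₀ : X) (hψ₀A : ψ₀ ∈ A.domain) (hψ₀H : ψ₀ ∈ H.domain) :
    ∀ I' : Set ℝ, Bornology.IsBounded I' →
      ∃ C : ℝ, ∀ t ∈ I', ‖A ⟨U t ψ₀, hInvA t ψ₀ hψ₀A hψ₀H⟩‖ ≤ C :=
  locally_bounded_of_closed_general A H hH hAdense hAsym hAclosed U hUadd hUgen hInvA hInvH ψ₀ hψ₀A
    hψ₀H
end

section
/- Let A be a densely defined hermitean operator on a Hilbert space X, and let t ↦ ψ(t) be a continuous map from ℝ to X with ψ(t) ∈ D(A) for all t. Then there exists a nonempty open interval (a,b) ⊂ ℝ such that sup_{t∈(a,b)} ‖Aψ(t)‖ < ∞. -/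
/-!
Since `A` is hermitean, `‖A x‖ = sup {|⟪x, A y⟫| : y ∈ D(A), ‖y‖ ≤ 1}` is a supremum of functions
continuous in `x`, so `t ↦ ‖A ψ(t)‖` is lower semicontinuous. Its sublevel sets
`{t | ‖A ψ(t)‖ ≤ n}` are therefore closed and cover `ℝ`, and by Baire one of them contains an
open interval.
-/

open Set

theorem norm_le_of_dense_of_norm_inner_le {𝕜 X : Type*} [RCLike 𝕜] [NormedAddCommGroup X]
    [InnerProductSpace 𝕜 X] {s : Set X} (hs : Dense s) {x : X} {C : ℝ} (hC : 0 ≤ C)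
    (h : ∀ y ∈ s, ‖(inner 𝕜 x y : 𝕜)‖ ≤ C * ‖y‖) : ‖x‖ ≤ C := by
  have hall : ∀ y, ‖(inner 𝕜 x y : 𝕜)‖ ≤ C * ‖y‖ :=
    hs.induction h (isClosed_le (by fun_prop) (by fun_prop))
  have hsq : ‖x‖ ^ 2 ≤ C * ‖x‖ := by
    simpa [inner_self_eq_norm_sq_to_K] using hall x
  nlinarith [norm_nonneg x]

theorem exists_isOpen_nonempty_forall_le_of_lowerSemicontinuous {α : Type*} [TopologicalSpace α]
    [BaireSpace α] [Nonempty α] {f : α → ℝ} (hf : LowerSemicontinuous f) :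
    ∃ U : Set α, IsOpen U ∧ U.Nonempty ∧ ∃ C : ℝ, ∀ x ∈ U, f x ≤ C := by
  have hcover : ⋃ n : ℕ, f ⁻¹' Iic (n : ℝ) = univ :=
    eq_univ_of_forall fun x => mem_iUnion.2 ⟨⌈f x⌉₊, Nat.le_ceil (f x)⟩
  obtain ⟨n, hn⟩ :=
    nonempty_interior_of_iUnion_of_closed (fun n : ℕ => hf.isClosed_preimage (n : ℝ)) hcover
  exact ⟨_, isOpen_interior, hn, n, fun x hx => (interior_subset hx : x ∈ f ⁻¹' Iic (n : ℝ))⟩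

namespace LinearPMap

variable {𝕜 X : Type*} [RCLike 𝕜] [NormedAddCommGroup X] [InnerProductSpace 𝕜 X]

theorem lowerSemicontinuous_norm_apply {A : X →ₗ.[𝕜] X} (hdense : Dense (A.domain : Set X))
    (hsym : ∀ x y : A.domain, (inner 𝕜 (A x) (y : X) : 𝕜) = inner 𝕜 (x : X) (A y)) :
    LowerSemicontinuous fun x : A.domain => ‖A x‖ := by
  refine lowerSemicontinuous_iff_isClosed_preimage.2 fun c => ?_
  rcases lt_or_ge c 0 with hc | hc
  · convert isClosed_empty
    exact eq_empty_of_forall_notMem fun x hx => (norm_nonneg _).not_gt (lt_of_le_of_lt hx hc)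
  have hiInter : (fun x : A.domain => ‖A x‖) ⁻¹' Iic c =
      ⋂ y : A.domain, {x : A.domain | ‖(inner 𝕜 (x : X) (A y) : 𝕜)‖ ≤ c * ‖(y : X)‖} := by
    ext x
    simp only [mem_preimage, mem_Iic, mem_iInter, mem_ofPred_eq, ← hsym]
    refine ⟨fun hx y => ?_, fun hx => ?_⟩
    · exact (norm_inner_le_norm _ _).trans (mul_le_mul_of_nonneg_right hx (norm_nonneg _))
    · exact norm_le_of_dense_of_norm_inner_le hdense hc fun y hy => hx ⟨y, hy⟩
  rw [hiInter]
  exact isClosed_iInter fun y => isClosed_le (by fun_prop) (by fun_prop)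

end LinearPMap

/-- **Baire category step.** If `A` is a densely defined hermitean operator on a Hilbert space
and `t ↦ ψ(t)` is continuous with values in `D(A)`, then `‖A ψ(t)‖` is bounded on some
nonempty open interval `(a, b)`. -/
theorem exists_interval_bound
    {X : Type*} [NormedAddCommGroup X] [InnerProductSpace ℂ X] [CompleteSpace X]
    (A : X →ₗ.[ℂ] X)
    (hAdense : Dense (A.domain : Set X))
    (hAsym : ∀ x y : A.domain, (inner ℂ (A x) (y : X) : ℂ) = inner ℂ (x : X) (A y))
    (ψ : ℝ → X) (hψcont : Continuous ψ) (hmem : ∀ t : ℝ, ψ t ∈ A.domain) :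
    ∃ a b : ℝ, a < b ∧ ∃ C : ℝ, ∀ t ∈ Set.Ioo a b, ‖A ⟨ψ t, hmem t⟩‖ ≤ C := by
  have hlsc : LowerSemicontinuous fun t => ‖A ⟨ψ t, hmem t⟩‖ :=
    (A.lowerSemicontinuous_norm_apply hAdense hAsym).comp (hψcont.subtype_mk hmem)
  obtain ⟨U, hUopen, hUne, C, hC⟩ :=
    exists_isOpen_nonempty_forall_le_of_lowerSemicontinuous hlsc
  obtain ⟨a, b, hab, hIoo⟩ := hUopen.exists_Ioo_subset hUne
  exact ⟨a, b, hab, C, fun t ht => hC t (hIoo ht)⟩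
end

section
/- For each n ∈ ℕ, the set Eₙ = {t ∈ ℝ : ‖Aψ(t)‖ ≤ n} is closed, where A is a densely defined hermitean operator on a Hilbert space X and ψ: ℝ → X is continuous with ψ(t) ∈ D(A) for all t. -/
/-!
For `x ∈ D(A)` the symmetry of `A` gives `⟪A x, y⟫ = ⟪x, A y⟫` on the dense domain, so
`‖A x‖ ≤ C` holds exactly when `‖⟪x, A y⟫‖ ≤ C ‖y‖` for every `y ∈ D(A)`. Hence `Eₙ` is an
intersection, over `y ∈ D(A)`, of the closed sets `{t | ‖⟪ψ t, A y⟫‖ ≤ n ‖y‖}`.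
-/

open scoped InnerProductSpace

section

variable {𝕜 E : Type*} [RCLike 𝕜] [NormedAddCommGroup E] [InnerProductSpace 𝕜 E]

theorem norm_le_of_dense_of_forall_norm_inner_le_s5 {s : Set E} (hs : Dense s) (x : E) {C : ℝ}
    (hC : 0 ≤ C) (h : ∀ y ∈ s, ‖⟪x, y⟫_𝕜‖ ≤ C * ‖y‖) : ‖x‖ ≤ C := by
  have hbound : ∀ y, ‖innerSL 𝕜 x y‖ ≤ C * ‖y‖ := fun y =>
    hs.induction (P := fun y => ‖innerSL 𝕜 x y‖ ≤ C * ‖y‖) h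
      (isClosed_le (by fun_prop) (by fun_prop)) y
  simpa only [innerSL_apply_norm] using (innerSL 𝕜 x).opNorm_le_bound hC hbound

namespace LinearPMap.IsFormalAdjoint

variable {A : E →ₗ.[𝕜] E}

theorem norm_apply_le_iff (hA : A.IsFormalAdjoint A) (hdense : Dense (A.domain : Set E))
    (x : A.domain) {C : ℝ} (hC : 0 ≤ C) :
    ‖A x‖ ≤ C ↔ ∀ y : A.domain, ‖⟪(x : E), A y⟫_𝕜‖ ≤ C * ‖(y : E)‖ := by
  constructor
  · intro hx y
    calc ‖⟪(x : E), A y⟫_𝕜‖ = ‖⟪A x, (y : E)⟫_𝕜‖ := by rw [hA x y]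
      _ ≤ ‖A x‖ * ‖(y : E)‖ := norm_inner_le_norm _ _
      _ ≤ C * ‖(y : E)‖ := by gcongr
  · intro h
    refine norm_le_of_dense_of_forall_norm_inner_le_s5 (𝕜 := 𝕜) hdense (A x) hC fun y hy => ?_
    simpa only [hA x ⟨y, hy⟩] using h ⟨y, hy⟩

theorem isClosed_setOf_norm_apply_le {T : Type*} [TopologicalSpace T]
    (hA : A.IsFormalAdjoint A) (hdense : Dense (A.domain : Set E)) {ψ : T → E}
    (hψ : Continuous ψ) (hmem : ∀ t, ψ t ∈ A.domain) {C : ℝ} (hC : 0 ≤ C) :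
    _root_.IsClosed {t | ‖A ⟨ψ t, hmem t⟩‖ ≤ C} := by
  simp only [hA.norm_apply_le_iff hdense _ hC, Set.ofPred_forall]
  exact isClosed_iInter fun y => isClosed_le (by fun_prop) continuous_const

end LinearPMap.IsFormalAdjoint

end

theorem En_closed_general
    {X : Type*} [NormedAddCommGroup X] [InnerProductSpace ℂ X]
    (A : X →ₗ.[ℂ] X)
    (hAdense : Dense (A.domain : Set X))
    (hAsym : ∀ x y : A.domain, (inner ℂ (A x) (y : X) : ℂ) = inner ℂ (x : X) (A y))
    (ψ : ℝ → X) (hψcont : Continuous ψ) (hmem : ∀ t : ℝ, ψ t ∈ A.domain) :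
    ∀ n : ℕ, IsClosed {t : ℝ | ‖A ⟨ψ t, hmem t⟩‖ ≤ (n : ℝ)} := fun n =>
  LinearPMap.IsFormalAdjoint.isClosed_setOf_norm_apply_le hAsym hAdense hψcont hmem n.cast_nonneg

/-- The sets `Eₙ = {t : ‖A ψ(t)‖ ≤ n}` are closed, for `A` a densely defined hermitean
operator and `ψ : ℝ → X` continuous with values in `D(A)`. -/
theorem En_closed
    {X : Type*} [NormedAddCommGroup X] [InnerProductSpace ℂ X] [CompleteSpace X]
    (A : X →ₗ.[ℂ] X)
    (hAdense : Dense (A.domain : Set X))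
    (hAsym : ∀ x y : A.domain, (inner ℂ (A x) (y : X) : ℂ) = inner ℂ (x : X) (A y))
    (ψ : ℝ → X) (hψcont : Continuous ψ) (hmem : ∀ t : ℝ, ψ t ∈ A.domain) :
    ∀ n : ℕ, IsClosed {t : ℝ | ‖A ⟨ψ t, hmem t⟩‖ ≤ (n : ℝ)} :=
  En_closed_general A hAdense hAsym ψ hψcont hmem
end

section
/- Let H be self-adjoint and A closed on a Hilbert space X with T(t) = e^{-itH} leaving E := D(A) ∩ D(H) invariant. Fix ψ₀ ∈ E, and suppose there are ε > 0 and C > 0 with ‖A T(t)ψ₀‖ ≤ C for all |t| ≤ ε. Then for every n ∈ ℕ there is a constant Cₙ with ‖A T(t)ψ₀‖ ≤ Cₙ for all |t| ≤ nε; consequently sup_{t∈I} ‖A T(t)ψ₀‖ < ∞ for every bounded interval I. -/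
/-! By the closed graph theorem, `A ∘ U (±ε)` is bounded on `D(A) ∩ D(H)` for the graph norm
`‖x‖ + ‖A x‖ + ‖H x‖`. Since `U` commutes with `H`, neither `‖U s ψ₀‖` nor `‖H (U s ψ₀)‖` depends
on `s`, so `‖A (U (s ± ε) ψ₀)‖ ≤ a + b ‖A (U s ψ₀)‖` for constants `a`, `b`; by induction the bound
on `[-ε, ε]` then spreads to every `[-nε, nε]`. -/

open Complex

lemma forall_nat_exists_bound_of_shift_le {f : ℝ → ℝ} {ε C : ℝ} (hε : 0 ≤ ε)
    (hbase : ∀ t, |t| ≤ ε → f t ≤ C)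
    (hfwd : ∃ a b, 0 ≤ b ∧ ∀ s, f (ε + s) ≤ a + b * f s)
    (hbwd : ∃ a b, 0 ≤ b ∧ ∀ s, f (-ε + s) ≤ a + b * f s) (n : ℕ) :
    ∃ Cn, ∀ t, |t| ≤ n * ε → f t ≤ Cn := by
  obtain ⟨a₁, b₁, hb₁, h₁⟩ := hfwd
  obtain ⟨a₂, b₂, hb₂, h₂⟩ := hbwd
  induction n with
  | zero => exact ⟨C, fun t ht => hbase t (ht.trans (by simpa using hε))⟩
  | succ n ih =>
    obtain ⟨Cn, hCn⟩ := ih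
    refine ⟨max C (max (a₁ + b₁ * Cn) (a₂ + b₂ * Cn)), fun t ht => ?_⟩
    have hnε : 0 ≤ n * ε := by positivity
    rw [Nat.cast_succ, abs_le] at ht
    rcases le_or_gt |t| ε with hsmall | hlarge
    · exact (hbase t hsmall).trans (le_max_left _ _)
    rcases lt_abs.mp hlarge with hpos | hneg
    · have hs : |t - ε| ≤ n * ε := abs_le.mpr ⟨by linarith, by linarith⟩
      calc f t = f (ε + (t - ε)) := by rw [add_sub_cancel]
        _ ≤ a₁ + b₁ * Cn := (h₁ _).trans (by gcongr; exact hCn _ hs)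
        _ ≤ _ := le_max_of_le_right (le_max_left _ _)
    · have hs : |t + ε| ≤ n * ε := abs_le.mpr ⟨by linarith, by linarith⟩
      calc f t = f (-ε + (t + ε)) := by ring_nf
        _ ≤ a₂ + b₂ * Cn := (h₂ _).trans (by gcongr; exact hCn _ hs)
        _ ≤ _ := le_max_of_le_right (le_max_right _ _)

lemma exists_bound_of_isBounded_of_forall_nat {f : ℝ → ℝ} {ε : ℝ} (hε : 0 < ε)
    (hf : ∀ n : ℕ, ∃ Cn, ∀ t, |t| ≤ n * ε → f t ≤ Cn) {I : Set ℝ} (hI : Bornology.IsBounded I) :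
    ∃ C, ∀ t ∈ I, f t ≤ C := by
  obtain ⟨r, hr⟩ := hI.subset_closedBall 0
  obtain ⟨n, hn⟩ := Archimedean.arch r hε
  obtain ⟨Cn, hCn⟩ := hf n
  refine ⟨Cn, fun t ht => hCn t ?_⟩
  have : |t| ≤ r := by simpa using hr ht
  simpa using this.trans hn

namespace LinearPMap

variable {R E F G : Type*} [Ring R] [AddCommGroup E] [Module R E] [AddCommGroup F] [Module R F]
  [AddCommGroup G] [Module R G]

def pair (f : E →ₗ.[R] F) (g : E →ₗ.[R] G) : E →ₗ.[R] F × G where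
  domain := f.domain ⊓ g.domain
  toFun := (f.toFun ∘ₗ Submodule.inclusion inf_le_left).prod
    (g.toFun ∘ₗ Submodule.inclusion inf_le_right)

variable (f : E →ₗ.[R] F) (g : E →ₗ.[R] G)

theorem pair_apply (x : (f.pair g).domain) :
    f.pair g x = (f ⟨x, x.2.1⟩, g ⟨x, x.2.2⟩) := rfl

theorem mem_pair_graph_iff {p : E × F × G} :
    p ∈ (f.pair g).graph ↔ (p.1, p.2.1) ∈ f.graph ∧ (p.1, p.2.2) ∈ g.graph := by
  obtain ⟨p₁, p₂⟩ := p
  constructor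
  · rw [mem_graph_iff]
    rintro ⟨x, rfl, rfl⟩
    exact ⟨f.mem_graph ⟨x, x.2.1⟩, g.mem_graph ⟨x, x.2.2⟩⟩
  · rintro ⟨hf, hg⟩
    have hx : p₁ ∈ (f.pair g).domain := ⟨mem_domain_of_mem_graph hf, mem_domain_of_mem_graph hg⟩
    rw [← image_iff hx]
    ext
    · exact (image_iff hx.1).mpr hf
    · exact (image_iff hx.2).mpr hg

end LinearPMap

namespace LinearPMap

variable {𝕜 E F G : Type*} [NontriviallyNormedField 𝕜]
  [NormedAddCommGroup E] [NormedSpace 𝕜 E] [NormedAddCommGroup F] [NormedSpace 𝕜 F]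
  [NormedAddCommGroup G] [NormedSpace 𝕜 G]

theorem IsClosed.pair {f : E →ₗ.[𝕜] F} {g : E →ₗ.[𝕜] G} (hf : f.IsClosed) (hg : g.IsClosed) :
    (f.pair g).IsClosed := by
  have hgraph : ((f.pair g).graph : Set (E × F × G)) =
      (fun p => (p.1, p.2.1)) ⁻¹' f.graph ∩ (fun p => (p.1, p.2.2)) ⁻¹' g.graph :=
    Set.ext fun _ => mem_pair_graph_iff f g
  rw [LinearPMap.IsClosed, hgraph]
  exact (hf.preimage (by fun_prop)).inter (hg.preimage (by fun_prop))

variable {E' F' : Type*} [NormedAddCommGroup E'] [NormedSpace 𝕜 E']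
  [NormedAddCommGroup F'] [NormedSpace 𝕜 F']

theorem exists_norm_apply_le_graph_norm [CompleteSpace E] [CompleteSpace F] [CompleteSpace F']
    {T : E →ₗ.[𝕜] F} (hT : T.IsClosed) {A : E' →ₗ.[𝕜] F'} (hA : A.IsClosed) (V : E →L[𝕜] E')
    (hV : ∀ x ∈ T.domain, V x ∈ A.domain) :
    ∃ M, 0 ≤ M ∧ ∀ x : T.domain, ‖A ⟨V x, hV x x.2⟩‖ ≤ M * (‖(x : E)‖ + ‖T x‖) := by
  have : CompleteSpace T.graph := hT.completeSpace_coe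
  let π : T.graph →ₗ[𝕜] T.domain := LinearMap.codRestrict T.domain
    (LinearMap.fst 𝕜 E F ∘ₗ T.graph.subtype) fun p => mem_domain_of_mem_graph p.2
  let Φ : T.graph →ₗ[𝕜] F' := A.toFun ∘ₗ (V : E →ₗ[𝕜] E').restrict hV ∘ₗ π
  have hΦ : _root_.IsClosed (Φ.graph : Set (T.graph × F')) := by
    have hgraph : (Φ.graph : Set (T.graph × F')) =
        (fun q => (V (q.1 : E × F).1, q.2)) ⁻¹' A.graph :=
      Set.ext fun q => image_iff _
    rw [hgraph]
    exact hA.preimage (by fun_prop)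
  let Φc := ContinuousLinearMap.ofIsClosedGraph hΦ
  refine ⟨‖Φc‖, norm_nonneg _, fun x => ?_⟩
  calc ‖A ⟨V x, hV x x.2⟩‖ = ‖Φc ⟨((x : E), T x), T.mem_graph x⟩‖ := rfl
    _ ≤ ‖Φc‖ * ‖((x : E), T x)‖ := Φc.le_opNorm _
    _ ≤ ‖Φc‖ * (‖(x : E)‖ + ‖T x‖) := by
      gcongr
      exact max_le_add_of_nonneg (norm_nonneg _) (norm_nonneg _)

theorem exists_norm_apply_le_of_isClosed_pair [CompleteSpace E] [CompleteSpace F]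
    [CompleteSpace G] [CompleteSpace F'] {A : E →ₗ.[𝕜] F} {H : E →ₗ.[𝕜] G} (hA : A.IsClosed)
    (hH : H.IsClosed) {B : E' →ₗ.[𝕜] F'} (hB : B.IsClosed) (V : E →L[𝕜] E')
    (hV : ∀ x, x ∈ A.domain → x ∈ H.domain → V x ∈ B.domain) :
    ∃ M, 0 ≤ M ∧ ∀ x (hxA : x ∈ A.domain) (hxH : x ∈ H.domain),
      ‖B ⟨V x, hV x hxA hxH⟩‖ ≤ M * (‖x‖ + ‖A ⟨x, hxA⟩‖ + ‖H ⟨x, hxH⟩‖) := by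
  have hAH : (A.pair H).IsClosed := hA.pair hH
  have hV' : ∀ x ∈ (A.pair H).domain, V x ∈ B.domain := fun x hx => hV x hx.1 hx.2
  obtain ⟨M, hM, hbound⟩ := exists_norm_apply_le_graph_norm hAH hB V hV'
  refine ⟨M, hM, fun x hxA hxH => (hbound ⟨x, hxA, hxH⟩).trans ?_⟩
  have hpair : ‖A.pair H ⟨x, hxA, hxH⟩‖ ≤ ‖A ⟨x, hxA⟩‖ + ‖H ⟨x, hxH⟩‖ := by
    rw [pair_apply, Prod.norm_mk]
    exact max_le_add_of_nonneg (norm_nonneg _) (norm_nonneg _)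
  rw [add_assoc]
  exact mul_le_mul_of_nonneg_left (add_le_add le_rfl hpair) hM

end LinearPMap

section UnitaryGroup

variable {X : Type*} [NormedAddCommGroup X] [NormedSpace ℂ X] {H : X →ₗ.[ℂ] X}
  {U : ℝ → X ≃ₗᵢ[ℂ] X}

theorem generator_apply_eq_apply_generator (hU0 : ∀ x : X, U 0 x = x)
    (hUadd : ∀ (s t : ℝ) (x : X), U (s + t) x = U s (U t x))
    (hUgen : ∀ (ψ : H.domain) (t : ℝ), HasDerivAt (fun s : ℝ => U s (ψ : X)) (-I • U t (H ψ)) t)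
    (ψ : H.domain) (t : ℝ) (h : U t ψ ∈ H.domain) : H ⟨U t ψ, h⟩ = U t (H ψ) := by
  have h₁ : HasDerivAt (fun s => U (s + t) ψ) (-I • U t (H ψ)) 0 :=
    HasDerivAt.comp_add_const (f := fun s => U s ψ) 0 t (by rw [zero_add]; exact hUgen ψ t)
  have h₂ : HasDerivAt (fun s => U (s + t) ψ) (-I • H ⟨U t ψ, h⟩) 0 := by
    simpa only [hUadd, hU0] using hUgen ⟨U t ψ, h⟩ 0
  exact smul_right_injective X (neg_ne_zero.mpr I_ne_zero) (h₂.unique h₁)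

end UnitaryGroup

theorem bound_propagates_general
    {X : Type*} [NormedAddCommGroup X] [InnerProductSpace ℂ X] [CompleteSpace X]
    (A H : X →ₗ.[ℂ] X)
    (hH : IsSelfAdjoint H) (hAclosed : A.IsClosed)
    (U : ℝ → X ≃ₗᵢ[ℂ] X)
    (hU0 : ∀ x : X, U 0 x = x)
    (hUadd : ∀ (s t : ℝ) (x : X), U (s + t) x = U s (U t x))
    (hUgen : ∀ (ψ : H.domain) (t : ℝ),
      HasDerivAt (fun s : ℝ => U s (ψ : X)) (-I • U t (H ψ)) t)
    (hInvA : ∀ (t : ℝ) (x : X), x ∈ A.domain → x ∈ H.domain → U t x ∈ A.domain)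
    (hInvH : ∀ (t : ℝ) (x : X), x ∈ A.domain → x ∈ H.domain → U t x ∈ H.domain)
    (ψ₀ : X) (hψ₀A : ψ₀ ∈ A.domain) (hψ₀H : ψ₀ ∈ H.domain)
    (ε C : ℝ) (hε : 0 < ε)
    (hbd : ∀ t : ℝ, |t| ≤ ε → ‖A ⟨U t ψ₀, hInvA t ψ₀ hψ₀A hψ₀H⟩‖ ≤ C) :
    (∀ n : ℕ, ∃ Cn : ℝ, ∀ t : ℝ, |t| ≤ (n : ℝ) * ε →
        ‖A ⟨U t ψ₀, hInvA t ψ₀ hψ₀A hψ₀H⟩‖ ≤ Cn)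
    ∧ ∀ I' : Set ℝ, Bornology.IsBounded I' →
        ∃ C' : ℝ, ∀ t ∈ I', ‖A ⟨U t ψ₀, hInvA t ψ₀ hψ₀A hψ₀H⟩‖ ≤ C' := by
  set f : ℝ → ℝ := fun t => ‖A ⟨U t ψ₀, hInvA t ψ₀ hψ₀A hψ₀H⟩‖
  have hstep : ∀ σ, ∃ a b, 0 ≤ b ∧ ∀ s, f (σ + s) ≤ a + b * f s := by
    intro σ
    obtain ⟨M, hM, hbound⟩ := LinearPMap.exists_norm_apply_le_of_isClosed_pair hAclosed
      hH.isClosed hAclosed (U σ).toLinearIsometry.toContinuousLinearMap (hInvA σ)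
    refine ⟨M * (‖ψ₀‖ + ‖H ⟨ψ₀, hψ₀H⟩‖), M, hM, fun s => ?_⟩
    have hsA := hInvA s ψ₀ hψ₀A hψ₀H
    have hsH := hInvH s ψ₀ hψ₀A hψ₀H
    have hHs : ‖H ⟨U s ψ₀, hsH⟩‖ = ‖H ⟨ψ₀, hψ₀H⟩‖ := by
      rw [generator_apply_eq_apply_generator hU0 hUadd hUgen ⟨ψ₀, hψ₀H⟩ s hsH,
        LinearIsometryEquiv.norm_map]
    calc f (σ + s) = ‖A ⟨U σ (U s ψ₀), hInvA σ _ hsA hsH⟩‖ :=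
          congrArg (‖A ·‖) (Subtype.ext (hUadd σ s ψ₀))
      _ ≤ M * (‖U s ψ₀‖ + f s + ‖H ⟨U s ψ₀, hsH⟩‖) := hbound _ hsA hsH
      _ = _ := by rw [hHs, LinearIsometryEquiv.norm_map]; ring
  have hbdd := forall_nat_exists_bound_of_shift_le hε.le hbd (hstep ε) (hstep (-ε))
  exact ⟨hbdd, fun I hI => exists_bound_of_isBounded_of_forall_nat hε hbdd hI⟩

/-- **Propagation of local bounds.** If `‖A U t ψ₀‖ ≤ C` for `|t| ≤ ε`, then for every `n`
there is `Cₙ` with `‖A U t ψ₀‖ ≤ Cₙ` for `|t| ≤ n ε`; consequently `t ↦ ‖A U t ψ₀‖` is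
bounded on every bounded interval. -/
theorem bound_propagates
    {X : Type*} [NormedAddCommGroup X] [InnerProductSpace ℂ X] [CompleteSpace X]
    (A H : X →ₗ.[ℂ] X)
    (hH : IsSelfAdjoint H) (hAclosed : A.IsClosed)
    (U : ℝ → X ≃ₗᵢ[ℂ] X)
    (hU0 : ∀ x : X, U 0 x = x)
    (hUadd : ∀ (s t : ℝ) (x : X), U (s + t) x = U s (U t x))
    (hUgen : ∀ (ψ : H.domain) (t : ℝ),
      HasDerivAt (fun s : ℝ => U s (ψ : X)) (-I • U t (H ψ)) t)
    (hInvA : ∀ (t : ℝ) (x : X), x ∈ A.domain → x ∈ H.domain → U t x ∈ A.domain)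
    (hInvH : ∀ (t : ℝ) (x : X), x ∈ A.domain → x ∈ H.domain → U t x ∈ H.domain)
    (ψ₀ : X) (hψ₀A : ψ₀ ∈ A.domain) (hψ₀H : ψ₀ ∈ H.domain)
    (ε C : ℝ) (hε : 0 < ε) (hC : 0 < C)
    (hbd : ∀ t : ℝ, |t| ≤ ε → ‖A ⟨U t ψ₀, hInvA t ψ₀ hψ₀A hψ₀H⟩‖ ≤ C) :
    (∀ n : ℕ, ∃ Cn : ℝ, ∀ t : ℝ, |t| ≤ (n : ℝ) * ε →
        ‖A ⟨U t ψ₀, hInvA t ψ₀ hψ₀A hψ₀H⟩‖ ≤ Cn)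
    ∧ ∀ I' : Set ℝ, Bornology.IsBounded I' →
        ∃ C' : ℝ, ∀ t ∈ I', ‖A ⟨U t ψ₀, hInvA t ψ₀ hψ₀A hψ₀H⟩‖ ≤ C' :=
  bound_propagates_general A H hH hAclosed U hU0 hUadd hUgen hInvA hInvH ψ₀ hψ₀A hψ₀H ε C hε hbd
end

section
/- Let H be self-adjoint on X, ψ₀ ∈ D(H), and ψ(t) = e^{-itH}ψ₀. Let A be a linear operator with ψ(t) ∈ D(A) for all t and suppose sup_{|h|≤1} ‖Aψ(t+h)‖ < ∞ for each t, with A densely defined hermitean. Then t ↦ ⟨ψ(t), Aψ(t)⟩ is differentiable at every t with derivative i⟨Hψ(t), Aψ(t)⟩ − i⟨Aψ(t), Hψ(t)⟩. -/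
open Complex Filter Topology

/-! With `ψ s = U s ψ₀`, hermiticity of `A` gives `⟪ψ t, A ψ s⟫ = ⟪A ψ t, ψ s⟫`, hence
`⟪ψ s, A ψ s⟫ = ⟪ψ s - ψ t, A ψ s⟫ + ⟪A ψ t, ψ s⟫`. The second term is differentiable because
`ψ` is. The difference quotient of the first is `⟪(ψ s - ψ t) / (s - t), A ψ s⟫`, and it converges
to `⟪ψ' t, A ψ t⟫` because `A ψ s` is bounded near `t` and weakly continuous at `t`: for `w` in
the dense domain of `A`, `⟪w, A ψ s⟫ = ⟪A w, ψ s⟫` is continuous in `s`, and the bound extends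
this to every `w`. -/

section WeakLimits

variable {α 𝕜 E : Type*} [RCLike 𝕜] [NormedAddCommGroup E] [InnerProductSpace 𝕜 E]

local notation "⟪" x ", " y "⟫" => inner 𝕜 x y

theorem tendsto_inner_right_of_dense_of_bounded {l : Filter α} {f : α → E} {x : E} {D : Set E}
    (hD : Dense D) {C : ℝ} (hf : ∀ᶠ a in l, ‖f a‖ ≤ C)
    (hDlim : ∀ w ∈ D, Tendsto (fun a => ⟪w, f a⟫) l (𝓝 ⟪w, x⟫)) (v : E) :
    Tendsto (fun a => ⟪v, f a⟫) l (𝓝 ⟪v, x⟫) := by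
  rw [Metric.tendsto_nhds]
  intro ε hε
  set K := |C| + ‖x‖ + 1
  have hK : 0 < K := by positivity
  obtain ⟨w, hwD, hvw⟩ := hD.exists_dist_lt v (show 0 < ε / 2 / K by positivity)
  filter_upwards [hf, Metric.tendsto_nhds.mp (hDlim w hwD) (ε / 2) (half_pos hε)]
    with a hfa hwa
  rw [dist_eq_norm] at hvw hwa ⊢
  have hfx : ‖f a - x‖ ≤ K := by
    linarith [norm_sub_le (f a) x, le_abs_self C]
  calc ‖⟪v, f a⟫ - ⟪v, x⟫‖ = ‖⟪v - w, f a - x⟫ + (⟪w, f a⟫ - ⟪w, x⟫)‖ := by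
        simp only [inner_sub_left, inner_sub_right]; ring_nf
    _ ≤ ‖v - w‖ * ‖f a - x‖ + ‖⟪w, f a⟫ - ⟪w, x⟫‖ :=
        norm_add_le_of_le (norm_inner_le_norm _ _) le_rfl
    _ < ε / 2 / K * K + ε / 2 :=
        add_lt_add_of_le_of_lt (mul_le_mul hvw.le hfx (norm_nonneg _) (by positivity)) hwa
    _ = ε := by field_simp; ring

theorem tendsto_inner_of_tendsto_of_bounded {l : Filter α} {u f : α → E} {u₀ : E} {y : 𝕜}
    (hu : Tendsto u l (𝓝 u₀)) {C : ℝ} (hf : ∀ᶠ a in l, ‖f a‖ ≤ C)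
    (hf₀ : Tendsto (fun a => ⟪u₀, f a⟫) l (𝓝 y)) :
    Tendsto (fun a => ⟪u a, f a⟫) l (𝓝 y) := by
  have hsmall : Tendsto (fun a => ⟪u a - u₀, f a⟫) l (𝓝 0) := by
    have hlim : Tendsto (fun a => ‖u a - u₀‖ * C) l (𝓝 0) := by
      simpa using (tendsto_iff_norm_sub_tendsto_zero.mp hu).mul_const C
    refine squeeze_zero_norm' ?_ hlim
    filter_upwards [hf] with a ha
    exact (norm_inner_le_norm _ _).trans (mul_le_mul_of_nonneg_left ha (norm_nonneg _))
  simpa [inner_sub_left] using hsmall.add hf₀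

theorem LinearPMap.tendsto_inner_apply_of_isFormalAdjoint_self (A : E →ₗ.[𝕜] E)
    (hAdense : Dense (A.domain : Set E)) (hAsym : A.IsFormalAdjoint A) {l : Filter α}
    {g : α → A.domain} {x : A.domain} (hg : Tendsto (fun a => (g a : E)) l (𝓝 x)) {C : ℝ}
    (hbd : ∀ᶠ a in l, ‖A (g a)‖ ≤ C) (v : E) :
    Tendsto (fun a => ⟪v, A (g a)⟫) l (𝓝 ⟪v, A x⟫) := by
  refine tendsto_inner_right_of_dense_of_bounded hAdense hbd (fun w hw => ?_) v
  simp only [← hAsym ⟨w, hw⟩]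
  exact tendsto_const_nhds.inner hg

end WeakLimits

section Derivative

variable {𝕜 E : Type*} [RCLike 𝕜] [NormedAddCommGroup E] [InnerProductSpace 𝕜 E]
  [NormedSpace ℝ E] [IsScalarTower ℝ 𝕜 E]

local notation "⟪" x ", " y "⟫" => inner 𝕜 x y

theorem HasDerivAt.inner_of_weakly_continuous {g f : ℝ → E} {g' : E} {t : ℝ}
    (hg : HasDerivAt g g' t) {C : ℝ} (hf : ∀ᶠ s in 𝓝 t, ‖f s‖ ≤ C)
    (hweak : Tendsto (fun s => ⟪g', f s⟫) (𝓝 t) (𝓝 ⟪g', f t⟫))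
    (hsymm : ∀ s, ⟪g t, f s⟫ = ⟪f t, g s⟫) :
    HasDerivAt (fun s => ⟪g s, f s⟫) (⟪g', f t⟫ + ⟪f t, g'⟫) t := by
  have hsplit : (fun s => ⟪g s, f s⟫) = fun s => ⟪g s - g t, f s⟫ + ⟪f t, g s⟫ := by
    funext s; rw [inner_sub_left, hsymm]; ring
  rw [hsplit]
  refine HasDerivAt.add ?_ (by simpa using (hasDerivAt_const t (f t)).inner 𝕜 hg)
  rw [hasDerivAt_iff_tendsto_slope]
  have hslope : ∀ s, slope (fun s => ⟪g s - g t, f s⟫) t s = ⟪slope g t s, f s⟫ := by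
    intro s
    simp only [slope_def_module, sub_self, inner_zero_left, sub_zero, inner_smul_left_eq_smul]
  exact (tendsto_inner_of_tendsto_of_bounded (hasDerivAt_iff_tendsto_slope.mp hg)
    (hf.filter_mono nhdsWithin_le_nhds) (hweak.mono_left nhdsWithin_le_nhds)).congr
    fun s => (hslope s).symm

end Derivative

theorem hasDerivAt_orbit_of_hasDerivAt_zero {E : Type*} [NormedAddCommGroup E] [NormedSpace ℝ E]
    {U : ℝ → E → E} (hU : ∀ s t x, U (s + t) x = U s (U t x)) {x v : E} {t : ℝ}
    (h₀ : HasDerivAt (fun s => U s (U t x)) v 0) :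
    HasDerivAt (fun s => U s x) v t := by
  have := HasDerivAt.comp_sub_const t t (by rwa [sub_self])
  simpa only [← hU, sub_add_cancel] using this

theorem expected_value_differentiable_general
    {X : Type*} [NormedAddCommGroup X] [InnerProductSpace ℂ X]
    (A H : X →ₗ.[ℂ] X)
    (hAdense : Dense (A.domain : Set X))
    (hAsym : ∀ x y : A.domain, (inner ℂ (A x) (y : X) : ℂ) = inner ℂ (x : X) (A y))
    (U : ℝ → X ≃ₗᵢ[ℂ] X)
    (hU0 : ∀ x : X, U 0 x = x)
    (hUadd : ∀ (s t : ℝ) (x : X), U (s + t) x = U s (U t x))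
    (hUgen : ∀ (ψ : H.domain) (t : ℝ),
      HasDerivAt (fun s : ℝ => U s (ψ : X)) (-I • U t (H ψ)) t)
    (hHinv : ∀ (t : ℝ) (x : X), x ∈ H.domain → U t x ∈ H.domain)
    (ψ₀ : X) (hψ₀ : ψ₀ ∈ H.domain)
    (hmem : ∀ t : ℝ, U t ψ₀ ∈ A.domain)
    (hbd : ∀ t : ℝ, ∃ C : ℝ, ∀ h : ℝ, |h| ≤ 1 →
      ‖A ⟨U (t + h) ψ₀, hmem (t + h)⟩‖ ≤ C) :
    ∀ t : ℝ, HasDerivAt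
      (fun s : ℝ => (inner ℂ (U s ψ₀) (A ⟨U s ψ₀, hmem s⟩) : ℂ))
      (I * (inner ℂ (H ⟨U t ψ₀, hHinv t ψ₀ hψ₀⟩) (A ⟨U t ψ₀, hmem t⟩) : ℂ)
        - I * (inner ℂ (A ⟨U t ψ₀, hmem t⟩) (H ⟨U t ψ₀, hHinv t ψ₀ hψ₀⟩) : ℂ)) t := by
  intro t
  have hψ : HasDerivAt (fun s => U s ψ₀) (-I • H ⟨U t ψ₀, hHinv t ψ₀ hψ₀⟩) t := by
    refine hasDerivAt_orbit_of_hasDerivAt_zero (U := fun s => U s) hUadd ?_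
    simpa only [hU0] using hUgen ⟨U t ψ₀, hHinv t ψ₀ hψ₀⟩ 0
  obtain ⟨C, hC⟩ := hbd t
  have hAψ_bdd : ∀ᶠ s in 𝓝 t, ‖A ⟨U s ψ₀, hmem s⟩‖ ≤ C := by
    filter_upwards [Metric.closedBall_mem_nhds t one_pos] with s hs
    have := hC (s - t) (by rwa [Metric.mem_closedBall, Real.dist_eq] at hs)
    rwa [add_sub_cancel] at this
  have hweak := A.tendsto_inner_apply_of_isFormalAdjoint_self hAdense hAsym
    (g := fun s => ⟨U s ψ₀, hmem s⟩) (x := ⟨U t ψ₀, hmem t⟩) hψ.continuousAt hAψ_bdd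
  refine (hψ.inner_of_weakly_continuous hAψ_bdd (hweak _)
    (fun s => (hAsym ⟨_, hmem t⟩ ⟨_, hmem s⟩).symm)).congr_deriv ?_
  simp only [inner_smul_left, inner_smul_right, map_neg, conj_I]
  ring

/-- Differentiability of the expected value under a local bound: if `ψ(t) = U t ψ₀ ∈ D(A)`
for all `t` with `sup_{|h| ≤ 1} ‖A ψ(t+h)‖ < ∞` for each `t`, where `A` is densely defined
hermitean, then `t ↦ ⟨ψ(t), A ψ(t)⟩` is differentiable with derivative
`i⟨Hψ(t), Aψ(t)⟩ - i⟨Aψ(t), Hψ(t)⟩`. -/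
theorem expected_value_differentiable
    {X : Type*} [NormedAddCommGroup X] [InnerProductSpace ℂ X] [CompleteSpace X]
    (A H : X →ₗ.[ℂ] X)
    (hH : IsSelfAdjoint H)
    (hAdense : Dense (A.domain : Set X))
    (hAsym : ∀ x y : A.domain, (inner ℂ (A x) (y : X) : ℂ) = inner ℂ (x : X) (A y))
    (U : ℝ → X ≃ₗᵢ[ℂ] X)
    (hU0 : ∀ x : X, U 0 x = x)
    (hUadd : ∀ (s t : ℝ) (x : X), U (s + t) x = U s (U t x))
    (hUgen : ∀ (ψ : H.domain) (t : ℝ),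
      HasDerivAt (fun s : ℝ => U s (ψ : X)) (-I • U t (H ψ)) t)
    (hHinv : ∀ (t : ℝ) (x : X), x ∈ H.domain → U t x ∈ H.domain)
    (ψ₀ : X) (hψ₀ : ψ₀ ∈ H.domain)
    (hmem : ∀ t : ℝ, U t ψ₀ ∈ A.domain)
    (hbd : ∀ t : ℝ, ∃ C : ℝ, ∀ h : ℝ, |h| ≤ 1 →
      ‖A ⟨U (t + h) ψ₀, hmem (t + h)⟩‖ ≤ C) :
    ∀ t : ℝ, HasDerivAt
      (fun s : ℝ => (inner ℂ (U s ψ₀) (A ⟨U s ψ₀, hmem s⟩) : ℂ))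
      (I * (inner ℂ (H ⟨U t ψ₀, hHinv t ψ₀ hψ₀⟩) (A ⟨U t ψ₀, hmem t⟩) : ℂ)
        - I * (inner ℂ (A ⟨U t ψ₀, hmem t⟩) (H ⟨U t ψ₀, hHinv t ψ₀ hψ₀⟩) : ℂ)) t :=
  expected_value_differentiable_general A H hAdense hAsym U hU0 hUadd hUgen hHinv ψ₀ hψ₀ hmem hbd
end

section
/- Let X be a Hilbert space, H self-adjoint with ψ(t) = e^{-itH}ψ₀ for ψ₀ ∈ D(H), and A densely defined hermitean with ψ(t) ∈ D(A) for all t and sup_{t∈I} ‖Aψ(t)‖ < ∞ for bounded intervals I. If t_j → t, then ⟨Hψ(t_j), Aψ(t_j)⟩ → ⟨Hψ(t), Aψ(t)⟩; consequently the derivative t ↦ i⟨Hψ(t), Aψ(t)⟩ − i⟨Aψ(t), Hψ(t)⟩ is continuous. -/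
/-! Since `H` commutes with the evolution, `Hψ(t) = U t (Hψ₀)`, and `t ↦ U t x` is continuous
for every `x` because it is on the dense set `D(H)` and the `U t` are isometries; so
`Hψ(t_j) → Hψ(t)` in norm. Hermiticity gives `⟨z, Aψ(t)⟩ = ⟨Az, ψ(t)⟩` for `z ∈ D(A)`, and the
uniform bound on `‖Aψ(t_j)‖` extends this convergence from the dense set `D(A)` to all of `X`:
`Aψ(t_j) → Aψ(t)` weakly. A norm-convergent sequence paired with a bounded weakly convergent one
converges. -/

open Complex Filter Topology

section

variable {ι : Type*} {l : Filter ι}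

theorem Equicontinuous.tendsto_of_dense {X Y : Type*} [TopologicalSpace X] [UniformSpace Y]
    {F : ι → X → Y} {f : X → Y} (hF : Equicontinuous F) (hf : Continuous f) {D : Set X}
    (hD : Dense D) (h : ∀ z ∈ D, Tendsto (F · z) l (𝓝 (f z))) (x : X) :
    Tendsto (F · x) l (𝓝 (f x)) :=
  (hF.isClosed_setOfPred_tendsto hf).closure_subset_iff.mpr h (hD x)

theorem continuous_apply_of_dense_s11 {α X Y : Type*} [TopologicalSpace α] [PseudoMetricSpace X]
    [PseudoMetricSpace Y] {U : α → X → Y} (hU : ∀ t, Isometry (U t)) {D : Set X}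
    (hD : Dense D) (h : ∀ z ∈ D, Continuous fun t => U t z) (x : X) :
    Continuous fun t => U t x := by
  refine continuous_iff_continuousAt.mpr fun t => ?_
  have hequi : Equicontinuous U :=
    (LipschitzWith.uniformEquicontinuous U 1 fun s => (hU s).lipschitz).equicontinuous
  exact hequi.tendsto_of_dense (hU t).continuous hD (fun z hz => (h z hz).continuousAt) x

variable {𝕜 E : Type*} [RCLike 𝕜] [SeminormedAddCommGroup E] [InnerProductSpace 𝕜 E]

theorem tendsto_inner_left_of_dense {v : ι → E} {y : E} {C : ℝ} (hv : ∀ i, ‖v i‖ ≤ C)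
    {D : Set E} (hD : Dense D)
    (h : ∀ z ∈ D, Tendsto (fun i => inner 𝕜 z (v i)) l (𝓝 (inner 𝕜 z y)))
    (x : E) : Tendsto (fun i => inner 𝕜 x (v i)) l (𝓝 (inner 𝕜 x y)) := by
  have hlip : ∀ i, LipschitzWith C.toNNReal fun z : E => inner 𝕜 z (v i) := fun i =>
    LipschitzWith.of_dist_le_mul fun z z' => by
      rw [dist_eq_norm, dist_eq_norm, ← inner_sub_left, mul_comm]
      exact (norm_inner_le_norm _ _).trans
        (mul_le_mul_of_nonneg_left ((hv i).trans C.le_coe_toNNReal) (norm_nonneg _))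
  exact (LipschitzWith.uniformEquicontinuous _ _ hlip).equicontinuous.tendsto_of_dense
    (continuous_id.inner continuous_const) hD h x

theorem tendsto_inner_of_tendsto_of_bounded_s11 {u v : ι → E} {x y : E} {C : ℝ}
    (hu : Tendsto u l (𝓝 x)) (hv : ∀ i, ‖v i‖ ≤ C)
    (hweak : Tendsto (fun i => inner 𝕜 x (v i)) l (𝓝 (inner 𝕜 x y))) :
    Tendsto (fun i => inner 𝕜 (u i) (v i)) l (𝓝 (inner 𝕜 x y)) := by
  have hsmall : Tendsto (fun i => inner 𝕜 (u i - x) (v i)) l (𝓝 0) := by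
    refine squeeze_zero_norm (fun i => (norm_inner_le_norm _ _).trans
      (mul_le_mul_of_nonneg_left (hv i) (norm_nonneg _))) ?_
    simpa using (tendsto_iff_norm_sub_tendsto_zero.mp hu).mul_const C
  simpa [inner_sub_left] using hsmall.add hweak

end

theorem generator_apply_map_eq_map_apply {X : Type*} [NormedAddCommGroup X]
    [InnerProductSpace ℂ X]
    (H : X →ₗ.[ℂ] X) (U : ℝ → X ≃ₗᵢ[ℂ] X) (hU0 : ∀ x : X, U 0 x = x)
    (hUadd : ∀ (s t : ℝ) (x : X), U (s + t) x = U s (U t x))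
    (hUgen : ∀ (ψ : H.domain) (t : ℝ),
      HasDerivAt (fun s : ℝ => U s (ψ : X)) (-I • U t (H ψ)) t)
    (ψ : H.domain) (t : ℝ) (hψt : U t ψ ∈ H.domain) :
    H ⟨U t ψ, hψt⟩ = U t (H ψ) := by
  have hshift : HasDerivAt (fun s : ℝ => U (s + t) ψ) (-I • U t (H ψ)) 0 := by
    simpa using (hUgen ψ (0 + t)).comp_add_const 0 t
  have hat0 := hUgen ⟨U t ψ, hψt⟩ 0
  simp only [hU0, ← hUadd] at hat0
  exact smul_right_injective X (neg_ne_zero.mpr I_ne_zero) (hat0.unique hshift)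

/-- Continuity of the derivative: with `ψ(t) = U t ψ₀ ∈ D(A)` and `‖A ψ(t)‖` bounded on
bounded intervals, if `t_j → t` then `⟨Hψ(t_j), Aψ(t_j)⟩ → ⟨Hψ(t), Aψ(t)⟩`; consequently
`t ↦ i⟨Hψ(t), Aψ(t)⟩ - i⟨Aψ(t), Hψ(t)⟩` is continuous. -/
theorem derivative_continuous
    {X : Type*} [NormedAddCommGroup X] [InnerProductSpace ℂ X] [CompleteSpace X]
    (A H : X →ₗ.[ℂ] X)
    (hH : IsSelfAdjoint H)
    (hAdense : Dense (A.domain : Set X))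
    (hAsym : ∀ x y : A.domain, (inner ℂ (A x) (y : X) : ℂ) = inner ℂ (x : X) (A y))
    (U : ℝ → X ≃ₗᵢ[ℂ] X)
    (hU0 : ∀ x : X, U 0 x = x)
    (hUadd : ∀ (s t : ℝ) (x : X), U (s + t) x = U s (U t x))
    (hUgen : ∀ (ψ : H.domain) (t : ℝ),
      HasDerivAt (fun s : ℝ => U s (ψ : X)) (-I • U t (H ψ)) t)
    (hHinv : ∀ (t : ℝ) (x : X), x ∈ H.domain → U t x ∈ H.domain)
    (ψ₀ : X) (hψ₀ : ψ₀ ∈ H.domain)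
    (hmem : ∀ t : ℝ, U t ψ₀ ∈ A.domain)
    (hbd : ∀ I' : Set ℝ, Bornology.IsBounded I' →
      ∃ C : ℝ, ∀ t ∈ I', ‖A ⟨U t ψ₀, hmem t⟩‖ ≤ C) :
    (∀ (tseq : ℕ → ℝ) (t : ℝ), Tendsto tseq atTop (nhds t) →
      Tendsto (fun j : ℕ =>
          (inner ℂ (H ⟨U (tseq j) ψ₀, hHinv (tseq j) ψ₀ hψ₀⟩)
            (A ⟨U (tseq j) ψ₀, hmem (tseq j)⟩) : ℂ)) atTop
        (nhds (inner ℂ (H ⟨U t ψ₀, hHinv t ψ₀ hψ₀⟩) (A ⟨U t ψ₀, hmem t⟩))))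
    ∧ Continuous (fun t : ℝ =>
        I * (inner ℂ (H ⟨U t ψ₀, hHinv t ψ₀ hψ₀⟩) (A ⟨U t ψ₀, hmem t⟩) : ℂ)
          - I * (inner ℂ (A ⟨U t ψ₀, hmem t⟩) (H ⟨U t ψ₀, hHinv t ψ₀ hψ₀⟩) : ℂ)) := by
  have hU_dom : ∀ x ∈ H.domain, Continuous fun t => U t x := fun x hx =>
    continuous_iff_continuousAt.mpr fun t => (hUgen ⟨x, hx⟩ t).continuousAt
  have hHψ : Continuous fun t => (H ⟨U t ψ₀, hHinv t ψ₀ hψ₀⟩ : X) := by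
    simp only [generator_apply_map_eq_map_apply H U hU0 hUadd hUgen ⟨ψ₀, hψ₀⟩]
    exact continuous_apply_of_dense_s11 (fun t => (U t).isometry) hH.dense_domain hU_dom _
  have hAψ_weak :
      ∀ z ∈ A.domain, Continuous fun t => inner ℂ z (A ⟨U t ψ₀, hmem t⟩ : X) := by
    intro z hz
    have hsym : (fun t => inner ℂ z (A ⟨U t ψ₀, hmem t⟩ : X))
        = fun t => inner ℂ (A ⟨z, hz⟩ : X) (U t ψ₀) :=
      funext fun t => (hAsym ⟨z, hz⟩ ⟨_, hmem t⟩).symm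
    exact hsym ▸ continuous_const.inner (hU_dom ψ₀ hψ₀)
  have hseq : ∀ (tseq : ℕ → ℝ) (t : ℝ), Tendsto tseq atTop (𝓝 t) →
      Tendsto (fun j => inner ℂ (H ⟨U (tseq j) ψ₀, hHinv (tseq j) ψ₀ hψ₀⟩ : X)
        (A ⟨U (tseq j) ψ₀, hmem (tseq j)⟩ : X)) atTop
        (𝓝 (inner ℂ (H ⟨U t ψ₀, hHinv t ψ₀ hψ₀⟩ : X) (A ⟨U t ψ₀, hmem t⟩ : X))) := by
    intro tseq t ht
    obtain ⟨C, hC⟩ := hbd _ (Metric.isBounded_range_of_tendsto tseq ht)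
    have hbound : ∀ j, ‖(A ⟨U (tseq j) ψ₀, hmem (tseq j)⟩ : X)‖ ≤ C :=
      fun j => hC _ ⟨j, rfl⟩
    exact tendsto_inner_of_tendsto_of_bounded_s11 ((hHψ.tendsto t).comp ht) hbound
      (tendsto_inner_left_of_dense hbound hAdense
        (fun z hz => ((hAψ_weak z hz).tendsto t).comp ht) _)
  have hG : Continuous fun t => inner ℂ (H ⟨U t ψ₀, hHinv t ψ₀ hψ₀⟩ : X)
      (A ⟨U t ψ₀, hmem t⟩ : X) :=
    continuous_iff_seqContinuous.mpr fun {_ _} ht => hseq _ _ ht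
  refine ⟨hseq, ?_⟩
  simp only [← inner_conj_symm (A _ : X)]
  exact (continuous_const.mul hG).sub (continuous_const.mul (continuous_conj.comp hG))
end

section
/- Let ψ₀ be the tent function on ℝ with ψ₀(0) = ψ₀(2) = 0, ψ₀(1) = 1, linear on (−∞,0), (0,1), (1,2), (2,∞), and let ψ(t)(x) = ψ₀(x−t). For any open subinterval I ⊂ (0,1), there exists φ ∈ span{ψ(t) : t ∈ I} \ {0} (finite linear combinations) such that φ is orthogonal in L²(ℝ) to ψ(t) for every t ∉ I + ℤ. -/
/-! The inner product `⟨ψ(t), ψ(s)⟩` is `g (s - t)`, where `g` is the autocorrelation of the tent,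
a cubic spline with knots at the integers. If `t ∉ I + ℤ`, all differences `s - t` with `s ∈ I`
lie in a single interval `(m, m + 1)` on which `g` is one cubic polynomial, so the fourth
difference `φ = ∑ (-1)ⁱ (4 choose i) ψ(s₀ + iη)` with nodes in `I` is orthogonal to `ψ(t)`.
And `φ ≠ 0`, since just to the right of `s₀` only `ψ(s₀)` is nonzero. -/

open MeasureTheory

/-- The tent function: `tent 0 = tent 2 = 0`, `tent 1 = 1`, piecewise linear, vanishing
outside `[0,2]`. -/
noncomputable def tent (x : ℝ) : ℝ := max 0 (1 - |x - 1|)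

open Set

@[fun_prop]
lemma continuous_tent : Continuous tent := by
  unfold tent; fun_prop

lemma tent_eq_zero_of_nonpos {x : ℝ} (hx : x ≤ 0) : tent x = 0 := by
  rw [tent, abs_of_nonpos (by linarith)]
  exact max_eq_left (by linarith)

lemma tent_eq_zero_of_two_le {x : ℝ} (hx : 2 ≤ x) : tent x = 0 := by
  rw [tent, abs_of_nonneg (by linarith)]
  exact max_eq_left (by linarith)

lemma tent_eq_self {x : ℝ} (h₀ : 0 ≤ x) (h₁ : x ≤ 1) : tent x = x := by
  rw [tent, abs_of_nonpos (by linarith), max_eq_right (by linarith)]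
  ring

lemma tent_eq_two_sub {x : ℝ} (h₁ : 1 ≤ x) (h₂ : x ≤ 2) : tent x = 2 - x := by
  rw [tent, abs_of_nonneg (by linarith), max_eq_right (by linarith)]
  ring

lemma tent_eq_zero_of_notMem_Ioo {x : ℝ} (hx : x ∉ Ioo 0 2) : tent x = 0 := by
  rw [mem_Ioo, not_and_or, not_lt, not_lt] at hx
  exact hx.elim tent_eq_zero_of_nonpos tent_eq_zero_of_two_le

lemma hasCompactSupport_tent : HasCompactSupport tent :=
  HasCompactSupport.intro isCompact_Icc fun _ hx =>
    tent_eq_zero_of_notMem_Ioo fun h => hx (Ioo_subset_Icc_self h)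

lemma integrable_tent_sub_mul_tent_sub (t s : ℝ) :
    Integrable fun x => tent (x - t) * tent (x - s) :=
  (by fun_prop : Continuous fun x => tent (x - t) * tent (x - s)).integrable_of_hasCompactSupport
    ((hasCompactSupport_tent.comp_homeomorph (Homeomorph.subRight s)).mul_left)

noncomputable def tentAutocorr (u : ℝ) : ℝ := ∫ x, tent x * tent (x - u)

lemma integral_tent_sub_mul_tent_sub (t s : ℝ) :
    ∫ x, tent (x - t) * tent (x - s) = tentAutocorr (s - t) := by
  rw [tentAutocorr, ← integral_add_right_eq_self _ t]
  simp only [add_sub_cancel_right, sub_sub_eq_add_sub]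

lemma tentAutocorr_neg (u : ℝ) : tentAutocorr (-u) = tentAutocorr u := by
  rw [← zero_sub, ← integral_tent_sub_mul_tent_sub, ← sub_zero u,
    ← integral_tent_sub_mul_tent_sub]
  simp only [sub_zero, mul_comm]

lemma tentAutocorr_eq_intervalIntegral {u : ℝ} (h₂ : u ≤ 2) :
    tentAutocorr u = ∫ x in u..2, tent x * tent (x - u) := by
  rw [intervalIntegral.integral_of_le h₂, ← integral_Icc_eq_integral_Ioc, tentAutocorr,
    setIntegral_eq_integral_of_forall_compl_eq_zero]
  intro x hx
  rw [mem_Icc, not_and_or, not_le, not_le] at hx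
  rcases hx with hx | hx
  · rw [tent_eq_zero_of_nonpos (x := x - u) (by linarith), mul_zero]
  · rw [tent_eq_zero_of_two_le hx.le, zero_mul]

lemma integral_eq_of_eqOn_quadratic {f : ℝ → ℝ} {p q α β γ : ℝ} (hpq : p ≤ q)
    (hf : ∀ x ∈ Icc p q, f x = α + β * x + γ * x ^ 2) :
    ∫ x in p..q, f x = α * (q - p) + β * (q ^ 2 - p ^ 2) / 2 + γ * (q ^ 3 - p ^ 3) / 3 := by
  rw [intervalIntegral.integral_congr (g := fun x => α + β * x + γ * x ^ 2)
    (by rwa [uIcc_of_le hpq])]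
  have hii {g : ℝ → ℝ} (hg : Continuous g) : IntervalIntegrable g volume p q :=
    hg.intervalIntegrable p q
  rw [intervalIntegral.integral_add (hii (by fun_prop)) (hii (by fun_prop)),
    intervalIntegral.integral_add (hii (by fun_prop)) (hii (by fun_prop)),
    intervalIntegral.integral_const, intervalIntegral.integral_const_mul, integral_id,
    intervalIntegral.integral_const_mul, integral_pow, smul_eq_mul]
  ring

lemma intervalIntegrable_tent_mul_tent_sub (u p q : ℝ) :
    IntervalIntegrable (fun x => tent x * tent (x - u)) volume p q :=
  (by fun_prop : Continuous fun x => tent x * tent (x - u)).intervalIntegrable p q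

lemma tentAutocorr_of_le_one {u : ℝ} (h₀ : 0 ≤ u) (h₁ : u ≤ 1) :
    tentAutocorr u = 2 / 3 - u ^ 2 + u ^ 3 / 2 := by
  rw [tentAutocorr_eq_intervalIntegral (by linarith),
    ← intervalIntegral.integral_add_adjacent_intervals (b := 1)
      (intervalIntegrable_tent_mul_tent_sub ..) (intervalIntegrable_tent_mul_tent_sub ..),
    ← intervalIntegral.integral_add_adjacent_intervals (a := 1) (b := 1 + u)
      (intervalIntegrable_tent_mul_tent_sub ..) (intervalIntegrable_tent_mul_tent_sub ..),
    integral_eq_of_eqOn_quadratic (α := 0) (β := -u) (γ := 1) h₁,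
    integral_eq_of_eqOn_quadratic (α := -2 * u) (β := 2 + u) (γ := -1) (by linarith),
    integral_eq_of_eqOn_quadratic (α := 4 + 2 * u) (β := -(4 + u)) (γ := 1) (by linarith)]
  · ring
  all_goals
    rintro x ⟨hp, hq⟩
  · rw [tent_eq_two_sub (by linarith) hq, tent_eq_two_sub (by linarith) (by linarith)]; ring
  · rw [tent_eq_two_sub hp (by linarith), tent_eq_self (by linarith) (by linarith)]; ring
  · rw [tent_eq_self (by linarith) hq, tent_eq_self (by linarith) (by linarith)]; ring

lemma tentAutocorr_of_one_le {u : ℝ} (h₁ : 1 ≤ u) (h₂ : u ≤ 2) :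
    tentAutocorr u = (2 - u) ^ 3 / 6 := by
  rw [tentAutocorr_eq_intervalIntegral h₂,
    integral_eq_of_eqOn_quadratic (α := -2 * u) (β := 2 + u) (γ := -1) h₂]
  · ring
  rintro x ⟨hp, hq⟩
  rw [tent_eq_two_sub (by linarith) hq, tent_eq_self (by linarith) (by linarith)]; ring

lemma tentAutocorr_of_two_le {u : ℝ} (h₂ : 2 ≤ u) : tentAutocorr u = 0 := by
  rw [tentAutocorr, ← integral_zero ℝ ℝ]
  congr 1 with x
  rcases le_total x 2 with hx | hx
  · rw [tent_eq_zero_of_nonpos (x := x - u) (by linarith), mul_zero]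
  · rw [tent_eq_zero_of_two_le hx, zero_mul]

def IsCubicOn (f : ℝ → ℝ) (s : Set ℝ) : Prop :=
  ∃ A B C D : ℝ, ∀ u ∈ s, f u = A + B * u + C * u ^ 2 + D * u ^ 3

lemma IsCubicOn.comp_neg {f : ℝ → ℝ} {s t : Set ℝ} (hf : IsCubicOn f s)
    (hts : MapsTo Neg.neg t s) : IsCubicOn (fun u => f (-u)) t := by
  obtain ⟨A, B, C, D, hf⟩ := hf
  exact ⟨A, -B, C, -D, fun u hu => by simp only [hf _ (hts hu)]; ring⟩

lemma tentAutocorr_isCubicOn_Ioo_nat (n : ℕ) : IsCubicOn tentAutocorr (Ioo n (n + 1)) := by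
  match n with
  | 0 => exact ⟨2 / 3, 0, -1, 1 / 2, fun u ⟨h₀, h₁⟩ => by
      rw [tentAutocorr_of_le_one (by simpa using h₀.le) (by simpa using h₁.le)]; ring⟩
  | 1 => exact ⟨4 / 3, -2, 1, -1 / 6, fun u ⟨h₁, h₂⟩ => by
      rw [tentAutocorr_of_one_le (by simpa using h₁.le) (by norm_num at h₂; linarith)]; ring⟩
  | n + 2 => exact ⟨0, 0, 0, 0, fun u ⟨h₂, _⟩ => by
      rw [tentAutocorr_of_two_le (by push_cast at h₂; linarith [(n.cast_nonneg : (0 : ℝ) ≤ n)])]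
      ring⟩

lemma tentAutocorr_isCubicOn_Ioo (m : ℤ) : IsCubicOn tentAutocorr (Ioo m (m + 1)) := by
  cases m with
  | ofNat n => exact_mod_cast tentAutocorr_isCubicOn_Ioo_nat n
  | negSucc n =>
    have h := (tentAutocorr_isCubicOn_Ioo_nat n).comp_neg
      (t := Ioo (Int.negSucc n) (Int.negSucc n + 1))
      fun u ⟨h₁, h₂⟩ => by push_cast at h₁ h₂ ⊢; constructor <;> linarith
    simpa only [tentAutocorr_neg] using h

def fourthDiffCoeff : Fin 5 → ℝ := ![1, -4, 6, -4, 1]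

lemma sum_fourthDiffCoeff_mul_eq_zero {f : ℝ → ℝ} {s : Set ℝ} (hf : IsCubicOn f s) {x h : ℝ}
    (hs : ∀ i : Fin 5, x + i * h ∈ s) : ∑ i, fourthDiffCoeff i * f (x + i * h) = 0 := by
  obtain ⟨A, B, C, D, hf⟩ := hf
  simp only [Fin.sum_univ_five, hf _ (hs _), fourthDiffCoeff, Matrix.cons_val, Fin.isValue,
    Fin.coe_ofNat_eq_mod, Nat.reduceMod, Nat.cast_ofNat, Nat.cast_zero, Nat.cast_one]
  ring

lemma exists_int_Ioo_subset {a b t : ℝ} (ht : ¬ ∃ k : ℤ, t - k ∈ Ioo a b) :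
    ∃ m : ℤ, Ioo a b ⊆ Ioo (t + m) (t + m + 1) := by
  refine ⟨⌊a - t⌋, Ioo_subset_Ioo (by linarith [Int.floor_le (a - t)]) ?_⟩
  by_contra! h
  exact ht ⟨-(⌊a - t⌋ + 1), by
    push_cast; constructor <;> linarith [Int.lt_floor_add_one (a - t)]⟩

lemma integral_conj_tent_mul_sum {n : ℕ} (t : ℝ) (c : Fin n → ℂ) (s : Fin n → ℝ) :
    ∫ x, starRingEnd ℂ (tent (x - t) : ℂ) * ∑ i, c i * (tent (x - s i) : ℂ)
      = ∑ i, c i * (tentAutocorr (s i - t) : ℂ) := by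
  have hterm (i : Fin n) (x : ℝ) : starRingEnd ℂ (tent (x - t) : ℂ) * (c i * tent (x - s i))
      = c i * ((tent (x - t) * tent (x - s i) : ℝ) : ℂ) := by
    rw [Complex.conj_ofReal]; push_cast; ring
  simp_rw [Finset.mul_sum, hterm]
  rw [integral_finsetSum _ fun i _ => (integrable_tent_sub_mul_tent_sub t (s i)).ofReal.const_mul _]
  simp_rw [integral_const_mul, integral_complex_ofReal, integral_tent_sub_mul_tent_sub]

/-- For the tent function `ψ₀` and its translates `ψ(t) = ψ₀(· - t)`: for any nonempty open
subinterval `I = (a,b) ⊆ (0,1)` there is a nonzero finite linear combination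
`φ = ∑ cᵢ ψ(sᵢ)` with all `sᵢ ∈ I`, which is orthogonal in `L²(ℝ)` to `ψ(t)` for every
`t ∉ I + ℤ`. -/
theorem tent_orthogonal_combination :
    ∀ a b : ℝ, 0 ≤ a → a < b → b ≤ 1 →
      ∃ (n : ℕ) (c : Fin n → ℂ) (s : Fin n → ℝ),
        (∀ i : Fin n, s i ∈ Set.Ioo a b) ∧
        (fun x : ℝ => ∑ i : Fin n, c i * (tent (x - s i) : ℂ)) ≠ 0 ∧
        ∀ t : ℝ, (¬ ∃ k : ℤ, t - (k : ℝ) ∈ Set.Ioo a b) →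
          ∫ x : ℝ, (starRingEnd ℂ) ((tent (x - t) : ℂ))
              * (∑ i : Fin n, c i * (tent (x - s i) : ℂ)) = 0 := by
  intro a b ha hab hb
  set η := (b - a) / 6 with hη
  have hs (i : Fin 5) : a + η + i * η ∈ Ioo a b := by
    have : (i : ℝ) ≤ 4 := by exact_mod_cast Nat.le_of_lt_succ i.isLt
    constructor <;> nlinarith [(Nat.cast_nonneg (i : ℕ) : (0 : ℝ) ≤ i)]
  refine ⟨5, fun i => fourthDiffCoeff i, fun i => a + η + i * η, hs, fun h => ?_, fun t ht => ?_⟩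
  · have hx := congrFun h (a + 3 * η / 2)
    rw [Fin.sum_univ_succ, Finset.sum_eq_zero fun i _ => ?_] at hx
    · simp only [fourthDiffCoeff, Matrix.cons_val_zero, Complex.ofReal_one, Fin.val_zero,
        Nat.cast_zero, zero_mul, add_zero, add_sub_add_left_eq_sub, one_mul, Pi.zero_apply,
        Complex.ofReal_eq_zero] at hx
      rw [show 3 * η / 2 - η = η / 2 by ring, tent_eq_self (by linarith) (by linarith)] at hx
      linarith
    · rw [tent_eq_zero_of_nonpos, Complex.ofReal_zero, mul_zero]
      simp only [Fin.val_succ, Nat.cast_add, Nat.cast_one]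
      nlinarith [(Nat.cast_nonneg (i : ℕ) : (0 : ℝ) ≤ i)]
  · obtain ⟨m, hm⟩ := exists_int_Ioo_subset ht
    rw [integral_conj_tent_mul_sum]
    have hdiff := sum_fourthDiffCoeff_mul_eq_zero (tentAutocorr_isCubicOn_Ioo m)
      (x := a + η - t) (h := η) fun i => by
        have := hm (hs i); constructor <;> linarith [this.1, this.2]
    simp_rw [sub_add_eq_add_sub] at hdiff
    exact_mod_cast congrArg ((↑) : ℝ → ℂ) hdiff
end
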